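/- arXiv:math/0701168 — 4 statements merged into one kernel-verified Lean document; each statement's English description precedes it below -/
import Mathlib

section
/- Let K be a field complete with respect to a nontrivial nonarchimedean absolute value, with ring of integers O_K and maximal ideal m_K. Let A : ℕ → ℕ → O_K be a matrix with A_{ii} − 1 ∈ m_K for all i, A_{ik} ∈ m_K for all i ≠ k, and such that for each fixed k the entries A_{ik} tend to 0 as i → ∞. Let d : ℕ → K satisfy |d_0| > |d_1| > |d_2| > ⋯ and |d_n| → 0. Suppose v : ℕ → O_K is a sequence with v_n → 0 and sup_n |v_n| = 1, and suppose μ ∈ K and j ∈ ℕ satisfy |μ| = |d_j| and, for every i, Σ_k A_{ik} · d_k · v_k = μ · v_i (the series converging in K). Then |v_i| < 1 for every i ≠ j, and |v_j| = 1; that is, the reduction of v modulo m_K is supported exactly at the index j. -/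
/-- A nonnegative real sequence tending to `0`, all of whose terms are `< M` with `M > 0`,
is uniformly bounded by some `c < M`. -/
lemma exists_bound_lt_of_tendsto_zero {f : ℕ → ℝ} (hf0 : ∀ n, 0 ≤ f n)
    (hlim : Filter.Tendsto f Filter.atTop (nhds 0)) {M : ℝ} (hM : 0 < M)
    (h : ∀ n, f n < M) : ∃ c, c < M ∧ ∀ n, f n ≤ c := by
  have hev : ∀ᶠ n in Filter.atTop, f n < M / 2 := by
    have := hlim (Metric.ball_mem_nhds (0 : ℝ) (by positivity : (0:ℝ) < M / 2))
    filter_upwards [this] with n hn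
    have : |f n - 0| < M / 2 := by simpa [Real.dist_eq] using hn
    have := abs_lt.mp this
    linarith [this.2]
  obtain ⟨N, hN⟩ := hev.exists_forall_of_atTop
  have hne : (Finset.range (N + 1)).Nonempty := ⟨0, by simp⟩
  refine ⟨max (M / 2) ((Finset.range (N + 1)).sup' hne f), ?_, ?_⟩
  · apply max_lt (by linarith)
    rw [Finset.sup'_lt_iff]
    exact fun n _ => h n
  · intro n
    rcases le_or_gt n N with hn | hn
    · exact le_max_of_le_right (Finset.le_sup' f (by simp [Nat.lt_succ_iff, hn]))
    · exact le_max_of_le_left (hN n hn.le).le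


/-- **Eigenvectors of `A·D` reduce to standard basis vectors mod the maximal ideal.**
Let `K` be a field complete with respect to a nontrivial nonarchimedean absolute value.
Let `A` be a matrix with entries in `O_K`, congruent to the identity modulo `m_K`, whose
columns tend to `0`, and let `d` be a sequence of scalars with strictly decreasing absolute
values tending to `0`.  If `v` is a sequence in `O_K` tending to `0` with `sup_n ‖v n‖ = 1`
satisfying `(A·D) v = μ v` with `‖μ‖ = ‖d j‖`, then `‖v i‖ < 1` for all `i ≠ j` and
`‖v j‖ = 1`; i.e. the reduction of `v` mod `m_K` is supported exactly at index `j`. -/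
theorem eigenvector_of_AD_reduces_to_basis_vector
    {K : Type*} [NormedField K] [CompleteSpace K] [IsUltrametricDist K]
    (hnontriv : ∃ x : K, x ≠ 0 ∧ ‖x‖ ≠ 1)
    (A : ℕ → ℕ → K)
    (hA_int : ∀ i k, ‖A i k‖ ≤ 1)
    (hA_diag : ∀ i, ‖A i i - 1‖ < 1)
    (hA_off : ∀ i k, i ≠ k → ‖A i k‖ < 1)
    (hA_col : ∀ k, Filter.Tendsto (fun i => A i k) Filter.atTop (nhds 0))
    (d : ℕ → K)
    (hd_strict : ∀ n, ‖d (n + 1)‖ < ‖d n‖)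
    (hd_lim : Filter.Tendsto (fun n => ‖d n‖) Filter.atTop (nhds 0))
    (v : ℕ → K)
    (hv_int : ∀ n, ‖v n‖ ≤ 1)
    (hv_lim : Filter.Tendsto (fun n => v n) Filter.atTop (nhds 0))
    (hv_sup : (⨆ n, ‖v n‖) = 1)
    (μ : K) (j : ℕ)
    (hμ : ‖μ‖ = ‖d j‖)
    (heig : ∀ i, HasSum (fun k => A i k * d k * v k) (μ * v i)) :
    (∀ i, i ≠ j → ‖v i‖ < 1) ∧ ‖v j‖ = 1 := by
  have hr_anti : StrictAnti fun n => ‖d n‖ := strictAnti_nat_of_succ_lt hd_strict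
  have hrj_pos : 0 < ‖d j‖ := lt_of_le_of_lt (norm_nonneg (d (j + 1))) (hd_strict j)
  have hμ_pos : 0 < ‖μ‖ := hμ ▸ hrj_pos
  set f : ℕ → ℝ := fun k => ‖d k‖ * ‖v k‖ with hf_def
  have hf0 : ∀ k, 0 ≤ f k := fun k => mul_nonneg (norm_nonneg _) (norm_nonneg _)
  have hf_le : ∀ k, f k ≤ ‖d k‖ := fun k =>
    mul_le_of_le_one_right (norm_nonneg _) (hv_int k)
  have hf_lim : Filter.Tendsto f Filter.atTop (nhds 0) := squeeze_zero hf0 hf_le hd_lim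
  have hbdd : BddAbove (Set.range f) := by
    refine ⟨‖d 0‖, ?_⟩
    rintro _ ⟨k, rfl⟩
    exact (hf_le k).trans (hr_anti.antitone (Nat.zero_le k))
  set M : ℝ := ⨆ k, f k with hM_def
  have hfM : ∀ k, f k ≤ M := fun k => le_ciSup hbdd k
  -- each term of any row is bounded by f k
  have hterm : ∀ i k, ‖A i k * d k * v k‖ ≤ ‖A i k‖ * f k := by
    intro i k
    rw [norm_mul, norm_mul, mul_assoc]
  have hterm' : ∀ i k, ‖A i k * d k * v k‖ ≤ f k := fun i k =>
    (hterm i k).trans (mul_le_of_le_one_left (hf0 k) (hA_int i k))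
  -- every ‖μ * v i‖ ≤ M
  have hrow : ∀ i, ‖μ * v i‖ ≤ M := by
    intro i
    rw [← (heig i).tsum_eq]
    exact IsUltrametricDist.norm_tsum_le_of_forall_le fun k => (hterm' i k).trans (hfM k)
  -- M ≥ ‖d j‖
  have hMge : ‖d j‖ ≤ M := by
    have h1 : ∀ i, ‖v i‖ ≤ M / ‖d j‖ := by
      intro i
      rw [le_div_iff₀ hrj_pos, mul_comm]
      calc ‖d j‖ * ‖v i‖ = ‖μ‖ * ‖v i‖ := by rw [hμ]
        _ = ‖μ * v i‖ := (norm_mul _ _).symm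
        _ ≤ M := hrow i
    have h2 : (⨆ n, ‖v n‖) ≤ M / ‖d j‖ := ciSup_le h1
    rw [hv_sup] at h2
    exact (one_le_div hrj_pos).mp h2
  have hM_pos : 0 < M := hrj_pos.trans_le hMge
  -- M is attained
  have hex : ∃ k, f k = M := by
    by_contra h
    push_neg at h
    obtain ⟨c, hc, hcb⟩ := exists_bound_lt_of_tendsto_zero hf0 hf_lim hM_pos
      (fun k => lt_of_le_of_ne (hfM k) (h k))
    exact absurd (ciSup_le hcb) (not_le.mpr hc)
  set k0 : ℕ := Nat.find hex with hk0_def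
  have hk0 : f k0 = M := Nat.find_spec hex
  have hk0_min : ∀ k, k < k0 → f k < M := fun k hk =>
    lt_of_le_of_ne (hfM k) (Nat.find_min hex hk)
  -- diagonal entries have norm 1
  have hdiag : ∀ i, ‖A i i‖ = 1 := by
    intro i
    have hne : ‖A i i - 1‖ ≠ ‖(1 : K)‖ := by rw [norm_one]; exact (hA_diag i).ne
    have h1 := IsUltrametricDist.norm_add_eq_max_of_norm_ne_norm hne
    rw [sub_add_cancel, norm_one] at h1
    rw [h1]
    exact max_eq_right (hA_diag i).le
  -- the main term at row k0
  have hmain : ‖A k0 k0 * d k0 * v k0‖ = M := by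
    rw [norm_mul, norm_mul, hdiag k0, one_mul]
    exact hk0
  -- separate the main term
  have hsplit : HasSum
      (fun k => A k0 k * d k * v k - if k = k0 then A k0 k0 * d k0 * v k0 else 0)
      (μ * v k0 - A k0 k0 * d k0 * v k0) :=
    (heig k0).sub (hasSum_ite_eq k0 _)
  set g : ℕ → ℝ :=
    fun k => ‖A k0 k * d k * v k - if k = k0 then A k0 k0 * d k0 * v k0 else 0‖ with hg_def
  have hg0 : ∀ k, 0 ≤ g k := fun k => norm_nonneg _
  have hg_le : ∀ k, g k ≤ ‖d k‖ := by
    intro k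
    by_cases hk : k = k0
    · subst hk; simp [hg_def]
    · simp only [hg_def, if_neg hk, sub_zero]
      exact (hterm' k0 k).trans (hf_le k)
  have hg_lim : Filter.Tendsto g Filter.atTop (nhds 0) := squeeze_zero hg0 hg_le hd_lim
  have hg_lt : ∀ k, g k < M := by
    intro k
    by_cases hk : k = k0
    · subst hk; simpa [hg_def] using hM_pos
    · simp only [hg_def, if_neg hk, sub_zero]
      calc ‖A k0 k * d k * v k‖ ≤ ‖A k0 k‖ * f k := hterm k0 k
        _ ≤ ‖A k0 k‖ * M := by
            have := hA_int k0 k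
            exact mul_le_mul_of_nonneg_left (hfM k) (norm_nonneg _)
        _ < M := mul_lt_of_lt_one_left hM_pos (hA_off k0 k (Ne.symm hk))
  obtain ⟨c, hc, hcb⟩ := exists_bound_lt_of_tendsto_zero hg0 hg_lim hM_pos hg_lt
  have hrest : ‖μ * v k0 - A k0 k0 * d k0 * v k0‖ ≤ c := by
    rw [← hsplit.tsum_eq]
    exact IsUltrametricDist.norm_tsum_le_of_forall_le hcb
  -- ‖μ * v k0‖ = M by the isosceles triangle
  have hT : ‖μ * v k0‖ = M := by
    have hne : ‖A k0 k0 * d k0 * v k0‖ ≠ ‖μ * v k0 - A k0 k0 * d k0 * v k0‖ := by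
      rw [hmain]; exact ((hrest.trans_lt hc)).ne'
    calc ‖μ * v k0‖
        = ‖A k0 k0 * d k0 * v k0 + (μ * v k0 - A k0 k0 * d k0 * v k0)‖ := by
          rw [add_sub_cancel]
      _ = max ‖A k0 k0 * d k0 * v k0‖ ‖μ * v k0 - A k0 k0 * d k0 * v k0‖ :=
          IsUltrametricDist.norm_add_eq_max_of_norm_ne_norm hne
      _ = M := by rw [hmain]; exact max_eq_left (hrest.trans hc.le)
  have hT' : ‖d j‖ * ‖v k0‖ = M := by rw [← hμ, ← norm_mul]; exact hT
  -- M = ‖d j‖ and ‖v k0‖ = 1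
  have hMle : M ≤ ‖d j‖ := by
    rw [← hT']
    exact mul_le_of_le_one_right hrj_pos.le (hv_int k0)
  have hMeq : M = ‖d j‖ := le_antisymm hMle hMge
  have hvk0 : ‖v k0‖ = 1 := by
    have := hT'
    rw [hMeq] at this
    have h1 : ‖d j‖ * ‖v k0‖ = ‖d j‖ * 1 := by rw [mul_one]; exact this
    exact mul_left_cancel₀ hrj_pos.ne' h1
  -- k0 = j
  have hk0j : k0 = j := by
    apply hr_anti.injective
    have : ‖d k0‖ * ‖v k0‖ = M := hk0
    rw [hvk0, mul_one, hMeq] at this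
    exact this
  subst hk0j
  -- strict bound off index k0 (= j)
  have hf_lt : ∀ k, k ≠ k0 → f k < M := by
    intro k hk
    rcases lt_or_gt_of_ne hk with h | h
    · exact hk0_min k h
    · calc f k ≤ ‖d k‖ := hf_le k
        _ < ‖d k0‖ := hr_anti h
        _ = M := by rw [hMeq]
  refine ⟨?_, hvk0⟩
  intro i hi
  set g' : ℕ → ℝ := fun k => ‖A i k * d k * v k‖ with hg'_def
  have hg'0 : ∀ k, 0 ≤ g' k := fun k => norm_nonneg _
  have hg'_le : ∀ k, g' k ≤ ‖d k‖ := fun k => (hterm' i k).trans (hf_le k)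
  have hg'_lim : Filter.Tendsto g' Filter.atTop (nhds 0) := squeeze_zero hg'0 hg'_le hd_lim
  have hg'_lt : ∀ k, g' k < M := by
    intro k
    by_cases hk : k = k0
    · subst hk
      calc g' k0 ≤ ‖A i k0‖ * f k0 := hterm i k0
        _ ≤ ‖A i k0‖ * M := mul_le_mul_of_nonneg_left (hfM k0) (norm_nonneg _)
        _ < M := mul_lt_of_lt_one_left hM_pos (hA_off i k0 hi)
    · exact (hterm' i k).trans_lt (hf_lt k hk)
  obtain ⟨c', hc', hcb'⟩ := exists_bound_lt_of_tendsto_zero hg'0 hg'_lim hM_pos hg'_lt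
  have hrow' : ‖μ * v i‖ ≤ c' := by
    rw [← (heig i).tsum_eq]
    exact IsUltrametricDist.norm_tsum_le_of_forall_le hcb'
  have : ‖μ‖ * ‖v i‖ < ‖μ‖ * 1 := by
    rw [mul_one, ← norm_mul, hμ, ← hMeq]
    exact hrow'.trans_lt hc'
  exact lt_of_mul_lt_mul_left this (norm_nonneg μ)
end

section
/- Let i and j be integers with j ≥ 1 and j < i ≤ 2j, and define the rational number a_{ij} = 2^{j−i} · 6ij · ((2j)! / (2^j · j!))² · ((2^i · i!) / (2i)!)² · ((2i−1)! / (i+j)!) · ((2j+i−1)! / (3j)!) · C(j, i−j), where C(j, i−j) is the binomial coefficient. Then a_{ij}/j is a 2-adic integer; that is, v₂(a_{ij}) ≥ v₂(j), where v₂ denotes the 2-adic valuation on ℚ. (Consequently, for every r ∈ (5/12, 7/12), the lower-triangular factor A^{(r)} in the LDU factorisation of the U operator for p = 2 has entries in the ring of integers and is congruent to the identity modulo the maximal ideal.) -/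
/-!
Write `ν(n) = v₂(n!)`. Since `ν(2n) = n + ν(n)`, both squared factors have valuation `0`, and
since `ν(2i) = ν(2i - 1) + 1 + v₂(i)` the factors `2^(j-i)`, `6i` and `(2i-1)!` combine to
valuation `j + ν(i)`, so that
`v₂(a) - v₂(j) = j + ν(i) + ν(2j+i-1) - ν(i+j) - ν(3j) + v₂(C(j, i-j))`.
Legendre's recursion `ν(n) = ⌊n/2⌋ + ν(⌊n/2⌋)` and the monotonicity of `ν` give
`ν(a) + ⌊b/2⌋ ≤ ν(b) + ⌊a/2⌋` for `a ≤ b`; applied to `j + ⌊(i-j)/2⌋ ≤ i` and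
`3j ≤ 2j+i-1`, together with `ν(i+j) = j + ⌊(i-j)/2⌋ + ν(j + ⌊(i-j)/2⌋)`, this reduces the
non-negativity of the right-hand side to an inequality between integer parts.
-/

open Nat

section Factorial

variable {p : ℕ} [Fact p.Prime]

theorem padicValNat_factorial_eq_div_add (n : ℕ) :
    padicValNat p n ! = n / p + padicValNat p (n / p)! := by
  rw [← padicValNat_mul_div_factorial, padicValNat_factorial_mul, add_comm]

theorem padicValNat_factorial_of_pos {n : ℕ} (hn : 0 < n) :
    padicValNat p n ! = padicValNat p (n - 1)! + padicValNat p n := by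
  obtain ⟨k, rfl⟩ := Nat.exists_eq_add_of_lt hn
  rw [zero_add, add_tsub_cancel_right, factorial_succ,
    padicValNat.mul (succ_ne_zero k) (factorial_ne_zero k), add_comm]

theorem padicValNat_factorial_le_factorial {a b : ℕ} (hab : a ≤ b) :
    padicValNat p a ! ≤ padicValNat p b ! :=
  (padicValNat_dvd_iff_le (factorial_ne_zero b)).1
    (pow_padicValNat_dvd.trans (factorial_dvd_factorial hab))

theorem padicValNat_factorial_add_div_le {a b : ℕ} (hab : a ≤ b) :
    padicValNat p a ! + b / p ≤ padicValNat p b ! + a / p := by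
  have := padicValNat_factorial_le_factorial (p := p) (Nat.div_le_div_right (c := p) hab)
  rw [padicValNat_factorial_eq_div_add a, padicValNat_factorial_eq_div_add b]
  omega

end Factorial

theorem padicValNat_two_factorial_add_three_mul_le {i j : ℕ} (hji : j < i) :
    padicValNat 2 (i + j)! + padicValNat 2 (3 * j)! ≤
      j + padicValNat 2 i ! + padicValNat 2 (2 * j + i - 1)! := by
  have h_sum := padicValNat_factorial_eq_div_add (p := 2) (i + j)
  rw [show (i + j) / 2 = j + (i - j) / 2 by omega] at h_sum
  have h_low := padicValNat_factorial_add_div_le (p := 2) (show j + (i - j) / 2 ≤ i by omega)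
  have h_high := padicValNat_factorial_add_div_le (p := 2) (show 3 * j ≤ 2 * j + i - 1 by omega)
  omega

theorem lower_factor_entries_two_integral_general
    (i j : ℕ) (hji : j < i) (hij : i ≤ 2 * j)
    (a : ℚ)
    (ha : a = (2 : ℚ) ^ ((j : ℤ) - (i : ℤ)) * (6 * (i : ℚ) * (j : ℚ)) *
      ((Nat.factorial (2 * j) : ℚ) / (2 ^ j * (Nat.factorial j : ℚ))) ^ 2 *
      ((2 ^ i * (Nat.factorial i : ℚ)) / (Nat.factorial (2 * i) : ℚ)) ^ 2 *
      ((Nat.factorial (2 * i - 1) : ℚ) / (Nat.factorial (i + j) : ℚ)) *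
      ((Nat.factorial (2 * j + i - 1) : ℚ) / (Nat.factorial (3 * j) : ℚ)) *
      (Nat.choose j (i - j) : ℚ)) :
    padicValRat 2 (j : ℚ) ≤ padicValRat 2 a := by
  have hi : (i : ℚ) ≠ 0 := by norm_cast; omega
  have hj : (j : ℚ) ≠ 0 := by norm_cast; omega
  have hC : (j.choose (i - j) : ℚ) ≠ 0 := by norm_cast; exact (choose_pos (by omega)).ne'
  have h2 : padicValRat 2 2 = 1 := padicValRat.self one_lt_two
  have h6 : padicValRat 2 6 = 1 := by
    rw [show (6 : ℚ) = (2 * 3 : ℕ) by norm_num, padicValRat.of_nat,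
      padicValNat.mul two_ne_zero three_ne_zero, padicValNat.self one_lt_two,
      padicValNat.eq_zero_of_not_dvd (by norm_num)]
    rfl
  have h_odd_part : padicValNat 2 (2 * i - 1)! + 1 + padicValNat 2 i = padicValNat 2 i ! + i := by
    rw [← padicValNat_factorial_mul, padicValNat_factorial_of_pos (by omega : 0 < 2 * i),
      padicValNat.mul two_ne_zero (by omega), padicValNat.self one_lt_two, add_assoc]
  have h_key := padicValNat_two_factorial_add_three_mul_le hji
  rw [ha]
  simp (disch := first | positivity | assumption) only [padicValRat.mul, padicValRat.div,
    padicValRat.pow, padicValRat.zpow, padicValRat.of_nat, h2, h6, padicValNat_factorial_mul,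
    Nat.cast_ofNat]
  omega

/-- **2-integrality of the entries of the lower triangular factor for `p = 2`.**
For integers `j ≥ 1` and `j < i ≤ 2j`, the Buzzard–Calegari formula
`a_{ij} = 2^{j−i} · 6ij · ((2j)!/(2^j j!))² · ((2^i i!)/(2i)!)² · ((2i−1)!/(i+j)!) ·
((2j+i−1)!/(3j)!) · C(j, i−j)` (the `(i,j)` entry of the lower-triangular factor `A^{(7/12)}`
of the LDU factorisation of the 2-adic `U` operator) satisfies `v₂(a_{ij}) ≥ v₂(j)`, i.e.
`a_{ij}/j` is a 2-adic integer. -/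
theorem lower_factor_entries_two_integral
    (i j : ℕ) (hj : 1 ≤ j) (hji : j < i) (hij : i ≤ 2 * j)
    (a : ℚ)
    (ha : a = (2 : ℚ) ^ ((j : ℤ) - (i : ℤ)) * (6 * (i : ℚ) * (j : ℚ)) *
      ((Nat.factorial (2 * j) : ℚ) / (2 ^ j * (Nat.factorial j : ℚ))) ^ 2 *
      ((2 ^ i * (Nat.factorial i : ℚ)) / (Nat.factorial (2 * i) : ℚ)) ^ 2 *
      ((Nat.factorial (2 * i - 1) : ℚ) / (Nat.factorial (i + j) : ℚ)) *
      ((Nat.factorial (2 * j + i - 1) : ℚ) / (Nat.factorial (3 * j) : ℚ)) *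
      (Nat.choose j (i - j) : ℚ)) :
    padicValRat 2 (j : ℚ) ≤ padicValRat 2 a :=
  lower_factor_entries_two_integral_general i j hji hij a ha
end

section
/- Let j ≥ 1 and t ≥ 1 be integers, and suppose that t is odd or j is odd. Then v₂((2j+2t−1)!) − v₂((2j+t)!) + v₂((3j+t−1)!) − v₂((3j)!) ≥ t − 1, where v₂ denotes the 2-adic valuation. (Equivalently, the product of the t−1 consecutive integers from 2j+t+1 to 2j+2t−1 times the product of the t−1 consecutive integers from 3j+1 to 3j+t−1 is divisible by 2^{t−1}.) -/
lemma valuation_as_sum (n b : ℕ) (hnb : Nat.log 2 n < b) :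
    padicValNat 2 (Nat.factorial n) = ∑ i ∈ Finset.Ico 1 b, n / 2 ^ i :=
  padicValNat_factorial hnb

/-- **The key 2-adic factorial valuation estimate.**
For integers `j ≥ 1` and `t ≥ 1` with `t` odd or `j` odd,
`v₂((2j+2t−1)!) − v₂((2j+t)!) + v₂((3j+t−1)!) − v₂((3j)!) ≥ t − 1`. -/
theorem two_adic_factorial_valuation_estimate
    (j t : ℕ) (hj : 1 ≤ j) (ht : 1 ≤ t) (h : Odd t ∨ Odd j) :
    (t : ℤ) - 1 ≤
      (padicValNat 2 (Nat.factorial (2 * j + 2 * t - 1)) : ℤ)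
        - (padicValNat 2 (Nat.factorial (2 * j + t)) : ℤ)
        + (padicValNat 2 (Nat.factorial (3 * j + t - 1)) : ℤ)
        - (padicValNat 2 (Nat.factorial (3 * j)) : ℤ) := by
  set b := 3 * j + 2 * t with hb
  have hbig : ∀ n : ℕ, n < b → Nat.log 2 n < b := by
    intro n hn
    calc Nat.log 2 n ≤ n := Nat.log_le_self 2 n
    _ < b := hn
  have h1 := valuation_as_sum (2 * j + 2 * t - 1) b (hbig _ (by omega))
  have h2 := valuation_as_sum (2 * j + t) b (hbig _ (by omega))
  have h3 := valuation_as_sum (3 * j + t - 1) b (hbig _ (by omega))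
  have h4 := valuation_as_sum (3 * j) b (hbig _ (by omega))
  rw [h1, h2, h3, h4]
  have hpar : t % 2 = 1 ∨ j % 2 = 1 := by
    rcases h with h | h
    · exact Or.inl (Nat.odd_iff.mp h)
    · exact Or.inr (Nat.odd_iff.mp h)
  have hb2 : (1 : ℕ) < b := by omega
  have hfirst : ((2 * j + 2 * t - 1) / 2 ^ 1 : ℕ) + ((3 * j + t - 1) / 2 ^ 1 : ℕ)
      = ((2 * j + t) / 2 ^ 1 : ℕ) + ((3 * j) / 2 ^ 1 : ℕ) + (t - 1) := by
    simp only [pow_one]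
    omega
  have htailA : ∑ i ∈ Finset.Ico 2 b, (2 * j + t) / 2 ^ i
      ≤ ∑ i ∈ Finset.Ico 2 b, (2 * j + 2 * t - 1) / 2 ^ i :=
    Finset.sum_le_sum fun i _ => Nat.div_le_div_right (by omega)
  have htailC : ∑ i ∈ Finset.Ico 2 b, (3 * j) / 2 ^ i
      ≤ ∑ i ∈ Finset.Ico 2 b, (3 * j + t - 1) / 2 ^ i :=
    Finset.sum_le_sum fun i _ => Nat.div_le_div_right (by omega)
  have eA := Finset.sum_eq_sum_Ico_succ_bot hb2 (fun i => (2 * j + 2 * t - 1) / 2 ^ i)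
  have eB := Finset.sum_eq_sum_Ico_succ_bot hb2 (fun i => (2 * j + t) / 2 ^ i)
  have eC := Finset.sum_eq_sum_Ico_succ_bot hb2 (fun i => (3 * j + t - 1) / 2 ^ i)
  have eD := Finset.sum_eq_sum_Ico_succ_bot hb2 (fun i => (3 * j) / 2 ^ i)
  norm_num at eA eB eC eD
  have key : (∑ i ∈ Finset.Ico 1 b, (2 * j + t) / 2 ^ i)
      + (∑ i ∈ Finset.Ico 1 b, (3 * j) / 2 ^ i) + (t - 1)
      ≤ (∑ i ∈ Finset.Ico 1 b, (2 * j + 2 * t - 1) / 2 ^ i)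
      + (∑ i ∈ Finset.Ico 1 b, (3 * j + t - 1) / 2 ^ i) := by
    rw [eA, eB, eC, eD]
    omega
  omega
end

section
/- Let u_{ij} (for integers i, j) be the matrix entries of the 2-adic U operator in the basis of powers of f₂, extended by u_{ij} = 0 whenever i ≤ 0 or j ≤ 0. Then for all integers i, j ≥ 3 one has the recurrence u_{ij} = 48·u_{i−1,j−1} + u_{i−1,j−2} + 4096·u_{i−2,j−1}. -/
/-- `σ_k(n) = Σ_{d ∣ n} d^k` as a rational number. -/
noncomputable def sigmaQ (k n : ℕ) : ℚ := ∑ d ∈ n.divisors, (d : ℚ) ^ k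

/-- The q-expansion of the level 1 Eisenstein series `E₄ = 1 + 240 Σ σ₃(n) qⁿ`. -/
noncomputable def E4 : PowerSeries ℚ :=
  PowerSeries.mk fun n => if n = 0 then 1 else 240 * sigmaQ 3 n

/-- The q-expansion of the level 1 Eisenstein series `E₆ = 1 − 504 Σ σ₅(n) qⁿ`. -/
noncomputable def E6 : PowerSeries ℚ :=
  PowerSeries.mk fun n => if n = 0 then 1 else -504 * sigmaQ 5 n

/-- The q-expansion of the discriminant cusp form `Δ = (E₄³ − E₆²)/1728`. -/
noncomputable def Delta : PowerSeries ℚ :=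
  PowerSeries.C (R := ℚ) (1 / 1728) * (E4 ^ 3 - E6 ^ 2)

/-- The operator `V_p` on q-expansions: substitution of `q^p` for `q`. -/
noncomputable def Vop (p : ℕ) (f : PowerSeries ℚ) : PowerSeries ℚ :=
  PowerSeries.mk fun n => if p ∣ n then PowerSeries.coeff (R := ℚ) (n / p) f else 0

/-- The operator `U_p` on q-expansions: `coeff_n (U_p h) = coeff_{p·n} h`. -/
noncomputable def Uop (p : ℕ) (f : PowerSeries ℚ) : PowerSeries ℚ :=
  PowerSeries.mk fun n => PowerSeries.coeff (R := ℚ) (p * n) f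


open PowerSeries Finset

noncomputable def gg (f : PowerSeries ℚ) : PowerSeries ℚ :=
  f^2 - Vop 2 f - C (R := ℚ) 48 * (f * Vop 2 f) - C (R := ℚ) 4096 * (f * (Vop 2 f)^2)

lemma coeff_Vop (p n : ℕ) (h : PowerSeries ℚ) :
    coeff (R := ℚ) n (Vop p h) = if p ∣ n then coeff (R := ℚ) (n / p) h else 0 := by simp [Vop]

lemma coeff_Uop (p n : ℕ) (h : PowerSeries ℚ) :
    coeff (R := ℚ) n (Uop p h) = coeff (R := ℚ) (p * n) h := by simp [Uop]

lemma sum_even (s : ℕ) (t : ℕ → ℚ) (ht : ∀ k, k < 2*s+1 → ¬ 2 ∣ k → t k = 0) :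
    ∑ k ∈ range (2*s+1), t k = ∑ x ∈ range (s+1), t (2*x) := by
  induction s with
  | zero => simp
  | succ s ih =>
    have h2 : 2*(s+1)+1 = (2*s+1)+1+1 := by ring
    rw [h2, Finset.sum_range_succ, Finset.sum_range_succ,
      ih (fun k hk h2k => ht k (by omega) h2k), ht (2*s+1) (by omega) (by omega),
      Finset.sum_range_succ, Finset.sum_range_succ]
    rw [show 2*s+1+1 = 2*(s+1) from by ring, Finset.sum_range_succ]
    ring

lemma Vop_mul (a b : PowerSeries ℚ) : Vop 2 (a*b) = Vop 2 a * Vop 2 b := by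
  ext n
  rw [PowerSeries.coeff_mul, Finset.Nat.sum_antidiagonal_eq_sum_range_succ_mk, coeff_Vop]
  by_cases hn : 2 ∣ n
  · obtain ⟨s, rfl⟩ := hn
    rw [if_pos (Dvd.intro s rfl), Nat.succ_eq_add_one]
    rw [sum_even s _ (fun k hk h2k => by rw [coeff_Vop, if_neg h2k, zero_mul])]
    rw [PowerSeries.coeff_mul, Finset.Nat.sum_antidiagonal_eq_sum_range_succ_mk]
    have hd : 2 * s / 2 = s := by omega
    rw [hd, Nat.succ_eq_add_one]
    refine Finset.sum_congr rfl (fun x hx => ?_)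
    have hxs : x ≤ s := Nat.lt_succ_iff.mp (Finset.mem_range.mp hx)
    have d1 : 2*x/2 = x := by omega
    have d2 : (2*s-2*x)/2 = s - x := by omega
    rw [coeff_Vop, coeff_Vop, if_pos ⟨x, rfl⟩, if_pos ⟨s - x, by omega⟩, d1, d2]
  · rw [if_neg hn]
    refine (Finset.sum_eq_zero (fun k hk => ?_)).symm
    have hk' : k ≤ n := Nat.lt_succ_iff.mp (Finset.mem_range.mp hk)
    by_cases h2 : 2 ∣ k
    · rw [coeff_Vop (h := b), if_neg (fun hc => hn (by omega)), mul_zero]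
    · rw [coeff_Vop (h := a), if_neg h2, zero_mul]

lemma Uop_mul_Vop (h k : PowerSeries ℚ) : Uop 2 (h * Vop 2 k) = k * Uop 2 h := by
  ext n
  rw [coeff_Uop, PowerSeries.coeff_mul, PowerSeries.coeff_mul,
    Finset.Nat.sum_antidiagonal_eq_sum_range_succ_mk,
    Finset.Nat.sum_antidiagonal_eq_sum_range_succ_mk, Nat.succ_eq_add_one,
    Nat.succ_eq_add_one]
  rw [sum_even n _ (fun a ha h2a => by
    rw [coeff_Vop, if_neg (fun hc => h2a (by omega)), mul_zero])]
  rw [← Finset.sum_range_reflect]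
  refine Finset.sum_congr rfl (fun x hx => ?_)
  have hxn : x ≤ n := Nat.lt_succ_iff.mp (Finset.mem_range.mp hx)
  have e2 : n + 1 - 1 - x = n - x := by omega
  rw [e2, coeff_Vop, coeff_Uop, if_pos ⟨x, by omega⟩,
    show (2*n - 2*(n-x))/2 = x from by omega]
  ring

lemma Uop_sub (a b : PowerSeries ℚ) : Uop 2 (a - b) = Uop 2 a - Uop 2 b := by
  ext n; simp [coeff_Uop]

lemma Uop_Cmul (r : ℚ) (a : PowerSeries ℚ) : Uop 2 (C (R := ℚ) r * a) = C (R := ℚ) r * Uop 2 a := by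
  ext n; simp [coeff_Uop]

lemma Uop_Vop (a : PowerSeries ℚ) : Uop 2 (Vop 2 a) = a := by
  ext n
  rw [coeff_Uop, coeff_Vop, if_pos ⟨n, rfl⟩, show 2*n/2 = n from by omega]

variable (f : PowerSeries ℚ)

lemma coeff_pow_lt (h0 : coeff (R := ℚ) 0 f = 0) (i k : ℕ) (hk : k < i) :
    coeff (R := ℚ) k (f ^ i) = 0 := by
  have hX : (X : PowerSeries ℚ) ∣ f := by
    rw [PowerSeries.X_dvd_iff]
    simpa [← PowerSeries.coeff_zero_eq_constantCoeff] using h0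
  have := pow_dvd_pow_of_dvd hX i
  exact (PowerSeries.X_pow_dvd_iff.mp this) k hk

lemma coeff_pow_self (h0 : coeff (R := ℚ) 0 f = 0) (h1 : coeff (R := ℚ) 1 f = 1) (i : ℕ) :
    coeff (R := ℚ) i (f ^ i) = 1 := by
  induction i with
  | zero => simp
  | succ i ih =>
    rw [pow_succ, PowerSeries.coeff_mul]
    rw [Finset.sum_eq_single (i, 1)]
    · rw [ih, h1, one_mul]
    · rintro ⟨a, b⟩ hab hne
      rw [Finset.HasAntidiagonal.mem_antidiagonal] at hab
      rcases Nat.lt_or_ge a i with h | h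
      · rw [coeff_pow_lt f h0 i a h, zero_mul]
      · rcases Nat.lt_or_ge b 1 with hb | hb
        · interval_cases b
          · simp only [h0, mul_zero]
        · exfalso; apply hne; simp at hab ⊢; omega
    · intro hmem
      exfalso; exact hmem (by rw [Finset.HasAntidiagonal.mem_antidiagonal])

lemma indep (h0 : coeff (R := ℚ) 0 f = 0) (h1 : coeff (R := ℚ) 1 f = 1) (M : ℕ) (c : ℕ → ℚ)
    (hs : ∀ k, k ≤ M → coeff (R := ℚ) k (∑ i ∈ range (M+1), C (R := ℚ) (c i) * f^i) = 0) :
    ∀ i, i ≤ M → c i = 0 := by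
  intro i
  induction i using Nat.strong_induction_on with
  | _ i ih =>
    intro hiM
    have hc := hs i hiM
    rw [map_sum] at hc
    simp only [PowerSeries.coeff_C_mul] at hc
    rw [Finset.sum_eq_single i] at hc
    · rw [coeff_pow_self f h0 h1, mul_one] at hc; exact hc
    · intro b hb hne
      rcases Nat.lt_or_ge b i with h | h
      · rw [ih b h (by omega), zero_mul]
      · rw [coeff_pow_lt f h0 b i (by omega), mul_zero]
    · intro hmem
      exact absurd (Finset.mem_range.mpr (by omega)) hmem

lemma coeffs_eq (h0 : coeff (R := ℚ) 0 f = 0) (h1 : coeff (R := ℚ) 1 f = 1) (M : ℕ) (a b : ℕ → ℚ)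
    (h : ∑ i ∈ range (M+1), C (R := ℚ) (a i) * f^i = ∑ i ∈ range (M+1), C (R := ℚ) (b i) * f^i) :
    ∀ i, i ≤ M → a i = b i := by
  intro i hi
  have := indep f h0 h1 M (fun i => a i - b i) (fun k hk => by
    have : ∑ i ∈ range (M+1), C (R := ℚ) (a i - b i) * f^i = 0 := by
      have : ∑ i ∈ range (M+1), C (R := ℚ) (a i - b i) * f^i
          = ∑ i ∈ range (M+1), C (R := ℚ) (a i) * f^i - ∑ i ∈ range (M+1), C (R := ℚ) (b i) * f^i := by
        rw [← Finset.sum_sub_distrib]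
        exact Finset.sum_congr rfl (fun i _ => by rw [map_sub, sub_mul])
      rw [this, h, sub_self]
    rw [this, map_zero]) i hi
  have h2 : a i - b i = 0 := this
  linarith

lemma span_vanish (h0 : coeff (R := ℚ) 0 f = 0) (h1 : coeff (R := ℚ) 1 f = 1) (M : ℕ) (c : ℕ → ℚ)
    (S : PowerSeries ℚ) (hS : S = ∑ i ∈ range (M+1), C (R := ℚ) (c i) * f^i)
    (hcoef : ∀ k, k ≤ M → coeff (R := ℚ) k S = 0) : S = 0 := by
  have := indep f h0 h1 M c (fun k hk => by rw [← hS]; exact hcoef k hk)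
  rw [hS]
  exact Finset.sum_eq_zero (fun i hi => by
    rw [this i (Nat.lt_succ_iff.mp (Finset.mem_range.mp hi)), map_zero, zero_mul])

lemma cE4_0 : coeff (R := ℚ) 0 E4 = 1 := by simp [E4]

lemma cE6_0 : coeff (R := ℚ) 0 E6 = 1 := by simp [E6]

lemma cE4_1 : coeff (R := ℚ) 1 E4 = (240 : ℚ) := by
  have h : coeff (R := ℚ) 1 E4 = 240 * sigmaQ 3 1 := by simp [E4]
  rw [h, sigmaQ, show (1:ℕ).divisors = {1} from by decide]; norm_num

lemma cE6_1 : coeff (R := ℚ) 1 E6 = (-504 : ℚ) := by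
  have h : coeff (R := ℚ) 1 E6 = -504 * sigmaQ 5 1 := by simp [E6]
  rw [h, sigmaQ, show (1:ℕ).divisors = {1} from by decide]; norm_num

lemma cE4_2 : coeff (R := ℚ) 2 E4 = (2160 : ℚ) := by
  have h : coeff (R := ℚ) 2 E4 = 240 * sigmaQ 3 2 := by simp [E4]
  rw [h, sigmaQ, show (2:ℕ).divisors = {1,2} from by decide]; norm_num

lemma cE6_2 : coeff (R := ℚ) 2 E6 = (-16632 : ℚ) := by
  have h : coeff (R := ℚ) 2 E6 = -504 * sigmaQ 5 2 := by simp [E6]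
  rw [h, sigmaQ, show (2:ℕ).divisors = {1,2} from by decide]; norm_num

lemma cE4_3 : coeff (R := ℚ) 3 E4 = (6720 : ℚ) := by
  have h : coeff (R := ℚ) 3 E4 = 240 * sigmaQ 3 3 := by simp [E4]
  rw [h, sigmaQ, show (3:ℕ).divisors = {1,3} from by decide]; norm_num

lemma cE6_3 : coeff (R := ℚ) 3 E6 = (-122976 : ℚ) := by
  have h : coeff (R := ℚ) 3 E6 = -504 * sigmaQ 5 3 := by simp [E6]
  rw [h, sigmaQ, show (3:ℕ).divisors = {1,3} from by decide]; norm_num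

lemma cE4_4 : coeff (R := ℚ) 4 E4 = (17520 : ℚ) := by
  have h : coeff (R := ℚ) 4 E4 = 240 * sigmaQ 3 4 := by simp [E4]
  rw [h, sigmaQ, show (4:ℕ).divisors = {1,2,4} from by decide]; norm_num

lemma cE6_4 : coeff (R := ℚ) 4 E6 = (-532728 : ℚ) := by
  have h : coeff (R := ℚ) 4 E6 = -504 * sigmaQ 5 4 := by simp [E6]
  rw [h, sigmaQ, show (4:ℕ).divisors = {1,2,4} from by decide]; norm_num

lemma cE4_5 : coeff (R := ℚ) 5 E4 = (30240 : ℚ) := by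
  have h : coeff (R := ℚ) 5 E4 = 240 * sigmaQ 3 5 := by simp [E4]
  rw [h, sigmaQ, show (5:ℕ).divisors = {1,5} from by decide]; norm_num

lemma cE6_5 : coeff (R := ℚ) 5 E6 = (-1575504 : ℚ) := by
  have h : coeff (R := ℚ) 5 E6 = -504 * sigmaQ 5 5 := by simp [E6]
  rw [h, sigmaQ, show (5:ℕ).divisors = {1,5} from by decide]; norm_num

lemma cE4_6 : coeff (R := ℚ) 6 E4 = (60480 : ℚ) := by
  have h : coeff (R := ℚ) 6 E4 = 240 * sigmaQ 3 6 := by simp [E4]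
  rw [h, sigmaQ, show (6:ℕ).divisors = {1,2,3,6} from by decide]; norm_num

lemma cE6_6 : coeff (R := ℚ) 6 E6 = (-4058208 : ℚ) := by
  have h : coeff (R := ℚ) 6 E6 = -504 * sigmaQ 5 6 := by simp [E6]
  rw [h, sigmaQ, show (6:ℕ).divisors = {1,2,3,6} from by decide]; norm_num

lemma cE4_7 : coeff (R := ℚ) 7 E4 = (82560 : ℚ) := by
  have h : coeff (R := ℚ) 7 E4 = 240 * sigmaQ 3 7 := by simp [E4]
  rw [h, sigmaQ, show (7:ℕ).divisors = {1,7} from by decide]; norm_num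

lemma cE6_7 : coeff (R := ℚ) 7 E6 = (-8471232 : ℚ) := by
  have h : coeff (R := ℚ) 7 E6 = -504 * sigmaQ 5 7 := by simp [E6]
  rw [h, sigmaQ, show (7:ℕ).divisors = {1,7} from by decide]; norm_num

lemma cE4_8 : coeff (R := ℚ) 8 E4 = (140400 : ℚ) := by
  have h : coeff (R := ℚ) 8 E4 = 240 * sigmaQ 3 8 := by simp [E4]
  rw [h, sigmaQ, show (8:ℕ).divisors = {1,2,4,8} from by decide]; norm_num

lemma cE6_8 : coeff (R := ℚ) 8 E6 = (-17047800 : ℚ) := by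
  have h : coeff (R := ℚ) 8 E6 = -504 * sigmaQ 5 8 := by simp [E6]
  rw [h, sigmaQ, show (8:ℕ).divisors = {1,2,4,8} from by decide]; norm_num

lemma cE4_9 : coeff (R := ℚ) 9 E4 = (181680 : ℚ) := by
  have h : coeff (R := ℚ) 9 E4 = 240 * sigmaQ 3 9 := by simp [E4]
  rw [h, sigmaQ, show (9:ℕ).divisors = {1,3,9} from by decide]; norm_num

lemma cE6_9 : coeff (R := ℚ) 9 E6 = (-29883672 : ℚ) := by
  have h : coeff (R := ℚ) 9 E6 = -504 * sigmaQ 5 9 := by simp [E6]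
  rw [h, sigmaQ, show (9:ℕ).divisors = {1,3,9} from by decide]; norm_num

lemma cE4_10 : coeff (R := ℚ) 10 E4 = (272160 : ℚ) := by
  have h : coeff (R := ℚ) 10 E4 = 240 * sigmaQ 3 10 := by simp [E4]
  rw [h, sigmaQ, show (10:ℕ).divisors = {1,2,5,10} from by decide]; norm_num

lemma cE6_10 : coeff (R := ℚ) 10 E6 = (-51991632 : ℚ) := by
  have h : coeff (R := ℚ) 10 E6 = -504 * sigmaQ 5 10 := by simp [E6]
  rw [h, sigmaQ, show (10:ℕ).divisors = {1,2,5,10} from by decide]; norm_num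

lemma cE4_11 : coeff (R := ℚ) 11 E4 = (319680 : ℚ) := by
  have h : coeff (R := ℚ) 11 E4 = 240 * sigmaQ 3 11 := by simp [E4]
  rw [h, sigmaQ, show (11:ℕ).divisors = {1,11} from by decide]; norm_num

lemma cE6_11 : coeff (R := ℚ) 11 E6 = (-81170208 : ℚ) := by
  have h : coeff (R := ℚ) 11 E6 = -504 * sigmaQ 5 11 := by simp [E6]
  rw [h, sigmaQ, show (11:ℕ).divisors = {1,11} from by decide]; norm_num

lemma cE4_12 : coeff (R := ℚ) 12 E4 = (490560 : ℚ) := by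
  have h : coeff (R := ℚ) 12 E4 = 240 * sigmaQ 3 12 := by simp [E4]
  rw [h, sigmaQ, show (12:ℕ).divisors = {1,2,3,4,6,12} from by decide]; norm_num

lemma cE6_12 : coeff (R := ℚ) 12 E6 = (-129985632 : ℚ) := by
  have h : coeff (R := ℚ) 12 E6 = -504 * sigmaQ 5 12 := by simp [E6]
  rw [h, sigmaQ, show (12:ℕ).divisors = {1,2,3,4,6,12} from by decide]; norm_num

lemma cE4_13 : coeff (R := ℚ) 13 E4 = (527520 : ℚ) := by
  have h : coeff (R := ℚ) 13 E4 = 240 * sigmaQ 3 13 := by simp [E4]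
  rw [h, sigmaQ, show (13:ℕ).divisors = {1,13} from by decide]; norm_num

lemma cE6_13 : coeff (R := ℚ) 13 E6 = (-187132176 : ℚ) := by
  have h : coeff (R := ℚ) 13 E6 = -504 * sigmaQ 5 13 := by simp [E6]
  rw [h, sigmaQ, show (13:ℕ).divisors = {1,13} from by decide]; norm_num

lemma cE42_0 : coeff (R := ℚ) 0 (E4*E4) = (1 : ℚ) := by
  rw [PowerSeries.coeff_mul, Finset.Nat.sum_antidiagonal_eq_sum_range_succ_mk]
  simp only [Finset.sum_range_succ, Finset.sum_range_zero]
  norm_num [cE4_0]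

lemma cE42_1 : coeff (R := ℚ) 1 (E4*E4) = (480 : ℚ) := by
  rw [PowerSeries.coeff_mul, Finset.Nat.sum_antidiagonal_eq_sum_range_succ_mk]
  simp only [Finset.sum_range_succ, Finset.sum_range_zero]
  norm_num [cE4_0, cE4_1]

lemma cE42_2 : coeff (R := ℚ) 2 (E4*E4) = (61920 : ℚ) := by
  rw [PowerSeries.coeff_mul, Finset.Nat.sum_antidiagonal_eq_sum_range_succ_mk]
  simp only [Finset.sum_range_succ, Finset.sum_range_zero]
  norm_num [cE4_0, cE4_1, cE4_2]

lemma cE42_3 : coeff (R := ℚ) 3 (E4*E4) = (1050240 : ℚ) := by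
  rw [PowerSeries.coeff_mul, Finset.Nat.sum_antidiagonal_eq_sum_range_succ_mk]
  simp only [Finset.sum_range_succ, Finset.sum_range_zero]
  norm_num [cE4_0, cE4_1, cE4_2, cE4_3]

lemma cE42_4 : coeff (R := ℚ) 4 (E4*E4) = (7926240 : ℚ) := by
  rw [PowerSeries.coeff_mul, Finset.Nat.sum_antidiagonal_eq_sum_range_succ_mk]
  simp only [Finset.sum_range_succ, Finset.sum_range_zero]
  norm_num [cE4_0, cE4_1, cE4_2, cE4_3, cE4_4]

lemma cE42_5 : coeff (R := ℚ) 5 (E4*E4) = (37500480 : ℚ) := by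
  rw [PowerSeries.coeff_mul, Finset.Nat.sum_antidiagonal_eq_sum_range_succ_mk]
  simp only [Finset.sum_range_succ, Finset.sum_range_zero]
  norm_num [cE4_0, cE4_1, cE4_2, cE4_3, cE4_4, cE4_5]

lemma cE42_6 : coeff (R := ℚ) 6 (E4*E4) = (135480960 : ℚ) := by
  rw [PowerSeries.coeff_mul, Finset.Nat.sum_antidiagonal_eq_sum_range_succ_mk]
  simp only [Finset.sum_range_succ, Finset.sum_range_zero]
  norm_num [cE4_0, cE4_1, cE4_2, cE4_3, cE4_4, cE4_5, cE4_6]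

lemma cE42_7 : coeff (R := ℚ) 7 (E4*E4) = (395301120 : ℚ) := by
  rw [PowerSeries.coeff_mul, Finset.Nat.sum_antidiagonal_eq_sum_range_succ_mk]
  simp only [Finset.sum_range_succ, Finset.sum_range_zero]
  norm_num [cE4_0, cE4_1, cE4_2, cE4_3, cE4_4, cE4_5, cE4_6, cE4_7]

lemma cE42_8 : coeff (R := ℚ) 8 (E4*E4) = (1014559200 : ℚ) := by
  rw [PowerSeries.coeff_mul, Finset.Nat.sum_antidiagonal_eq_sum_range_succ_mk]
  simp only [Finset.sum_range_succ, Finset.sum_range_zero]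
  norm_num [cE4_0, cE4_1, cE4_2, cE4_3, cE4_4, cE4_5, cE4_6, cE4_7, cE4_8]

lemma cE42_9 : coeff (R := ℚ) 9 (E4*E4) = (2296875360 : ℚ) := by
  rw [PowerSeries.coeff_mul, Finset.Nat.sum_antidiagonal_eq_sum_range_succ_mk]
  simp only [Finset.sum_range_succ, Finset.sum_range_zero]
  norm_num [cE4_0, cE4_1, cE4_2, cE4_3, cE4_4, cE4_5, cE4_6, cE4_7, cE4_8, cE4_9]

lemma cE42_10 : coeff (R := ℚ) 10 (E4*E4) = (4837561920 : ℚ) := by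
  rw [PowerSeries.coeff_mul, Finset.Nat.sum_antidiagonal_eq_sum_range_succ_mk]
  simp only [Finset.sum_range_succ, Finset.sum_range_zero]
  norm_num [cE4_0, cE4_1, cE4_2, cE4_3, cE4_4, cE4_5, cE4_6, cE4_7, cE4_8, cE4_9, cE4_10]

lemma cE42_11 : coeff (R := ℚ) 11 (E4*E4) = (9353842560 : ℚ) := by
  rw [PowerSeries.coeff_mul, Finset.Nat.sum_antidiagonal_eq_sum_range_succ_mk]
  simp only [Finset.sum_range_succ, Finset.sum_range_zero]
  norm_num [cE4_0, cE4_1, cE4_2, cE4_3, cE4_4, cE4_5, cE4_6, cE4_7, cE4_8, cE4_9, cE4_10, cE4_11]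

lemma cE42_12 : coeff (R := ℚ) 12 (E4*E4) = (17342613120 : ℚ) := by
  rw [PowerSeries.coeff_mul, Finset.Nat.sum_antidiagonal_eq_sum_range_succ_mk]
  simp only [Finset.sum_range_succ, Finset.sum_range_zero]
  norm_num [cE4_0, cE4_1, cE4_2, cE4_3, cE4_4, cE4_5, cE4_6, cE4_7, cE4_8, cE4_9, cE4_10, cE4_11, cE4_12]

lemma cE42_13 : coeff (R := ℚ) 13 (E4*E4) = (30119288640 : ℚ) := by
  rw [PowerSeries.coeff_mul, Finset.Nat.sum_antidiagonal_eq_sum_range_succ_mk]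
  simp only [Finset.sum_range_succ, Finset.sum_range_zero]
  norm_num [cE4_0, cE4_1, cE4_2, cE4_3, cE4_4, cE4_5, cE4_6, cE4_7, cE4_8, cE4_9, cE4_10, cE4_11, cE4_12, cE4_13]

lemma cE43_0 : coeff (R := ℚ) 0 (E4^3) = (1 : ℚ) := by
  rw [show E4^3 = (E4*E4)*E4 from by ring]
  rw [PowerSeries.coeff_mul, Finset.Nat.sum_antidiagonal_eq_sum_range_succ_mk]
  simp only [Finset.sum_range_succ, Finset.sum_range_zero]
  norm_num [cE42_0, cE4_0]

lemma cE43_1 : coeff (R := ℚ) 1 (E4^3) = (720 : ℚ) := by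
  rw [show E4^3 = (E4*E4)*E4 from by ring]
  rw [PowerSeries.coeff_mul, Finset.Nat.sum_antidiagonal_eq_sum_range_succ_mk]
  simp only [Finset.sum_range_succ, Finset.sum_range_zero]
  norm_num [cE42_0, cE42_1, cE4_0, cE4_1]

lemma cE43_2 : coeff (R := ℚ) 2 (E4^3) = (179280 : ℚ) := by
  rw [show E4^3 = (E4*E4)*E4 from by ring]
  rw [PowerSeries.coeff_mul, Finset.Nat.sum_antidiagonal_eq_sum_range_succ_mk]
  simp only [Finset.sum_range_succ, Finset.sum_range_zero]
  norm_num [cE42_0, cE42_1, cE42_2, cE4_0, cE4_1, cE4_2]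

lemma cE43_3 : coeff (R := ℚ) 3 (E4^3) = (16954560 : ℚ) := by
  rw [show E4^3 = (E4*E4)*E4 from by ring]
  rw [PowerSeries.coeff_mul, Finset.Nat.sum_antidiagonal_eq_sum_range_succ_mk]
  simp only [Finset.sum_range_succ, Finset.sum_range_zero]
  norm_num [cE42_0, cE42_1, cE42_2, cE42_3, cE4_0, cE4_1, cE4_2, cE4_3]

lemma cE43_4 : coeff (R := ℚ) 4 (E4^3) = (396974160 : ℚ) := by
  rw [show E4^3 = (E4*E4)*E4 from by ring]
  rw [PowerSeries.coeff_mul, Finset.Nat.sum_antidiagonal_eq_sum_range_succ_mk]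
  simp only [Finset.sum_range_succ, Finset.sum_range_zero]
  norm_num [cE42_0, cE42_1, cE42_2, cE42_3, cE42_4, cE4_0, cE4_1, cE4_2, cE4_3, cE4_4]

lemma cE43_5 : coeff (R := ℚ) 5 (E4^3) = (4632858720 : ℚ) := by
  rw [show E4^3 = (E4*E4)*E4 from by ring]
  rw [PowerSeries.coeff_mul, Finset.Nat.sum_antidiagonal_eq_sum_range_succ_mk]
  simp only [Finset.sum_range_succ, Finset.sum_range_zero]
  norm_num [cE42_0, cE42_1, cE42_2, cE42_3, cE42_4, cE42_5, cE4_0, cE4_1, cE4_2, cE4_3, cE4_4, cE4_5]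

lemma cE43_6 : coeff (R := ℚ) 6 (E4^3) = (34413301440 : ℚ) := by
  rw [show E4^3 = (E4*E4)*E4 from by ring]
  rw [PowerSeries.coeff_mul, Finset.Nat.sum_antidiagonal_eq_sum_range_succ_mk]
  simp only [Finset.sum_range_succ, Finset.sum_range_zero]
  norm_num [cE42_0, cE42_1, cE42_2, cE42_3, cE42_4, cE42_5, cE42_6, cE4_0, cE4_1, cE4_2, cE4_3, cE4_4, cE4_5, cE4_6]

lemma cE43_7 : coeff (R := ℚ) 7 (E4^3) = (187477879680 : ℚ) := by
  rw [show E4^3 = (E4*E4)*E4 from by ring]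
  rw [PowerSeries.coeff_mul, Finset.Nat.sum_antidiagonal_eq_sum_range_succ_mk]
  simp only [Finset.sum_range_succ, Finset.sum_range_zero]
  norm_num [cE42_0, cE42_1, cE42_2, cE42_3, cE42_4, cE42_5, cE42_6, cE42_7, cE4_0, cE4_1, cE4_2, cE4_3, cE4_4, cE4_5, cE4_6, cE4_7]

lemma cE43_8 : coeff (R := ℚ) 8 (E4^3) = (814940600400 : ℚ) := by
  rw [show E4^3 = (E4*E4)*E4 from by ring]
  rw [PowerSeries.coeff_mul, Finset.Nat.sum_antidiagonal_eq_sum_range_succ_mk]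
  simp only [Finset.sum_range_succ, Finset.sum_range_zero]
  norm_num [cE42_0, cE42_1, cE42_2, cE42_3, cE42_4, cE42_5, cE42_6, cE42_7, cE42_8, cE4_0, cE4_1, cE4_2, cE4_3, cE4_4, cE4_5, cE4_6, cE4_7, cE4_8]

lemma cE43_9 : coeff (R := ℚ) 9 (E4^3) = (2975469665040 : ℚ) := by
  rw [show E4^3 = (E4*E4)*E4 from by ring]
  rw [PowerSeries.coeff_mul, Finset.Nat.sum_antidiagonal_eq_sum_range_succ_mk]
  simp only [Finset.sum_range_succ, Finset.sum_range_zero]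
  norm_num [cE42_0, cE42_1, cE42_2, cE42_3, cE42_4, cE42_5, cE42_6, cE42_7, cE42_8, cE42_9, cE4_0, cE4_1, cE4_2, cE4_3, cE4_4, cE4_5, cE4_6, cE4_7, cE4_8, cE4_9]

lemma cE43_10 : coeff (R := ℚ) 10 (E4^3) = (9486467837280 : ℚ) := by
  rw [show E4^3 = (E4*E4)*E4 from by ring]
  rw [PowerSeries.coeff_mul, Finset.Nat.sum_antidiagonal_eq_sum_range_succ_mk]
  simp only [Finset.sum_range_succ, Finset.sum_range_zero]
  norm_num [cE42_0, cE42_1, cE42_2, cE42_3, cE42_4, cE42_5, cE42_6, cE42_7, cE42_8, cE42_9, cE42_10, cE4_0, cE4_1, cE4_2, cE4_3, cE4_4, cE4_5, cE4_6, cE4_7, cE4_8, cE4_9, cE4_10]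

lemma cE43_11 : coeff (R := ℚ) 11 (E4^3) = (27053330840640 : ℚ) := by
  rw [show E4^3 = (E4*E4)*E4 from by ring]
  rw [PowerSeries.coeff_mul, Finset.Nat.sum_antidiagonal_eq_sum_range_succ_mk]
  simp only [Finset.sum_range_succ, Finset.sum_range_zero]
  norm_num [cE42_0, cE42_1, cE42_2, cE42_3, cE42_4, cE42_5, cE42_6, cE42_7, cE42_8, cE42_9, cE42_10, cE42_11, cE4_0, cE4_1, cE4_2, cE4_3, cE4_4, cE4_5, cE4_6, cE4_7, cE4_8, cE4_9, cE4_10, cE4_11]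

lemma cE43_12 : coeff (R := ℚ) 12 (E4^3) = (70485969919680 : ℚ) := by
  rw [show E4^3 = (E4*E4)*E4 from by ring]
  rw [PowerSeries.coeff_mul, Finset.Nat.sum_antidiagonal_eq_sum_range_succ_mk]
  simp only [Finset.sum_range_succ, Finset.sum_range_zero]
  norm_num [cE42_0, cE42_1, cE42_2, cE42_3, cE42_4, cE42_5, cE42_6, cE42_7, cE42_8, cE42_9, cE42_10, cE42_11, cE42_12, cE4_0, cE4_1, cE4_2, cE4_3, cE4_4, cE4_5, cE4_6, cE4_7, cE4_8, cE4_9, cE4_10, cE4_11, cE4_12]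

lemma cE43_13 : coeff (R := ℚ) 13 (E4^3) = (169930679355360 : ℚ) := by
  rw [show E4^3 = (E4*E4)*E4 from by ring]
  rw [PowerSeries.coeff_mul, Finset.Nat.sum_antidiagonal_eq_sum_range_succ_mk]
  simp only [Finset.sum_range_succ, Finset.sum_range_zero]
  norm_num [cE42_0, cE42_1, cE42_2, cE42_3, cE42_4, cE42_5, cE42_6, cE42_7, cE42_8, cE42_9, cE42_10, cE42_11, cE42_12, cE42_13, cE4_0, cE4_1, cE4_2, cE4_3, cE4_4, cE4_5, cE4_6, cE4_7, cE4_8, cE4_9, cE4_10, cE4_11, cE4_12, cE4_13]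

lemma cE62_0 : coeff (R := ℚ) 0 (E6^2) = (1 : ℚ) := by
  rw [show E6^2 = E6*E6 from by ring]
  rw [PowerSeries.coeff_mul, Finset.Nat.sum_antidiagonal_eq_sum_range_succ_mk]
  simp only [Finset.sum_range_succ, Finset.sum_range_zero]
  norm_num [cE6_0]

lemma cE62_1 : coeff (R := ℚ) 1 (E6^2) = (-1008 : ℚ) := by
  rw [show E6^2 = E6*E6 from by ring]
  rw [PowerSeries.coeff_mul, Finset.Nat.sum_antidiagonal_eq_sum_range_succ_mk]
  simp only [Finset.sum_range_succ, Finset.sum_range_zero]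
  norm_num [cE6_0, cE6_1]

lemma cE62_2 : coeff (R := ℚ) 2 (E6^2) = (220752 : ℚ) := by
  rw [show E6^2 = E6*E6 from by ring]
  rw [PowerSeries.coeff_mul, Finset.Nat.sum_antidiagonal_eq_sum_range_succ_mk]
  simp only [Finset.sum_range_succ, Finset.sum_range_zero]
  norm_num [cE6_0, cE6_1, cE6_2]

lemma cE62_3 : coeff (R := ℚ) 3 (E6^2) = (16519104 : ℚ) := by
  rw [show E6^2 = E6*E6 from by ring]
  rw [PowerSeries.coeff_mul, Finset.Nat.sum_antidiagonal_eq_sum_range_succ_mk]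
  simp only [Finset.sum_range_succ, Finset.sum_range_zero]
  norm_num [cE6_0, cE6_1, cE6_2, cE6_3]

lemma cE62_4 : coeff (R := ℚ) 4 (E6^2) = (399517776 : ℚ) := by
  rw [show E6^2 = E6*E6 from by ring]
  rw [PowerSeries.coeff_mul, Finset.Nat.sum_antidiagonal_eq_sum_range_succ_mk]
  simp only [Finset.sum_range_succ, Finset.sum_range_zero]
  norm_num [cE6_0, cE6_1, cE6_2, cE6_3, cE6_4]

lemma cE62_5 : coeff (R := ℚ) 5 (E6^2) = (4624512480 : ℚ) := by
  rw [show E6^2 = E6*E6 from by ring]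
  rw [PowerSeries.coeff_mul, Finset.Nat.sum_antidiagonal_eq_sum_range_succ_mk]
  simp only [Finset.sum_range_succ, Finset.sum_range_zero]
  norm_num [cE6_0, cE6_1, cE6_2, cE6_3, cE6_4, cE6_5]

lemma cE62_6 : coeff (R := ℚ) 6 (E6^2) = (34423752384 : ℚ) := by
  rw [show E6^2 = E6*E6 from by ring]
  rw [PowerSeries.coeff_mul, Finset.Nat.sum_antidiagonal_eq_sum_range_succ_mk]
  simp only [Finset.sum_range_succ, Finset.sum_range_zero]
  norm_num [cE6_0, cE6_1, cE6_2, cE6_3, cE6_4, cE6_5, cE6_6]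

lemma cE62_7 : coeff (R := ℚ) 7 (E6^2) = (187506813312 : ℚ) := by
  rw [show E6^2 = E6*E6 from by ring]
  rw [PowerSeries.coeff_mul, Finset.Nat.sum_antidiagonal_eq_sum_range_succ_mk]
  simp only [Finset.sum_range_succ, Finset.sum_range_zero]
  norm_num [cE6_0, cE6_1, cE6_2, cE6_3, cE6_4, cE6_5, cE6_6, cE6_7]

lemma cE62_8 : coeff (R := ℚ) 8 (E6^2) = (814794618960 : ℚ) := by
  rw [show E6^2 = E6*E6 from by ring]
  rw [PowerSeries.coeff_mul, Finset.Nat.sum_antidiagonal_eq_sum_range_succ_mk]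
  simp only [Finset.sum_range_succ, Finset.sum_range_zero]
  norm_num [cE6_0, cE6_1, cE6_2, cE6_3, cE6_4, cE6_5, cE6_6, cE6_7, cE6_8]

lemma cE62_9 : coeff (R := ℚ) 9 (E6^2) = (2975666040144 : ℚ) := by
  rw [show E6^2 = E6*E6 from by ring]
  rw [PowerSeries.coeff_mul, Finset.Nat.sum_antidiagonal_eq_sum_range_succ_mk]
  simp only [Finset.sum_range_succ, Finset.sum_range_zero]
  norm_num [cE6_0, cE6_1, cE6_2, cE6_3, cE6_4, cE6_5, cE6_6, cE6_7, cE6_8, cE6_9]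

lemma cE62_10 : coeff (R := ℚ) 10 (E6^2) = (9486668147040 : ℚ) := by
  rw [show E6^2 = E6*E6 from by ring]
  rw [PowerSeries.coeff_mul, Finset.Nat.sum_antidiagonal_eq_sum_range_succ_mk]
  simp only [Finset.sum_range_succ, Finset.sum_range_zero]
  norm_num [cE6_0, cE6_1, cE6_2, cE6_3, cE6_4, cE6_5, cE6_6, cE6_7, cE6_8, cE6_9, cE6_10]

lemma cE62_11 : coeff (R := ℚ) 11 (E6^2) = (27052407031104 : ℚ) := by
  rw [show E6^2 = E6*E6 from by ring]
  rw [PowerSeries.coeff_mul, Finset.Nat.sum_antidiagonal_eq_sum_range_succ_mk]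
  simp only [Finset.sum_range_succ, Finset.sum_range_zero]
  norm_num [cE6_0, cE6_1, cE6_2, cE6_3, cE6_4, cE6_5, cE6_6, cE6_7, cE6_8, cE6_9, cE6_10, cE6_11]

lemma cE62_12 : coeff (R := ℚ) 12 (E6^2) = (70486610910912 : ℚ) := by
  rw [show E6^2 = E6*E6 from by ring]
  rw [PowerSeries.coeff_mul, Finset.Nat.sum_antidiagonal_eq_sum_range_succ_mk]
  simp only [Finset.sum_range_succ, Finset.sum_range_zero]
  norm_num [cE6_0, cE6_1, cE6_2, cE6_3, cE6_4, cE6_5, cE6_6, cE6_7, cE6_8, cE6_9, cE6_10, cE6_11, cE6_12]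

lemma cE62_13 : coeff (R := ℚ) 13 (E6^2) = (169931677686624 : ℚ) := by
  rw [show E6^2 = E6*E6 from by ring]
  rw [PowerSeries.coeff_mul, Finset.Nat.sum_antidiagonal_eq_sum_range_succ_mk]
  simp only [Finset.sum_range_succ, Finset.sum_range_zero]
  norm_num [cE6_0, cE6_1, cE6_2, cE6_3, cE6_4, cE6_5, cE6_6, cE6_7, cE6_8, cE6_9, cE6_10, cE6_11, cE6_12, cE6_13]

lemma cD_0 : coeff (R := ℚ) 0 Delta = (0 : ℚ) := by
  rw [Delta, PowerSeries.coeff_C_mul, map_sub, cE43_0, cE62_0]; norm_num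

lemma cD_1 : coeff (R := ℚ) 1 Delta = (1 : ℚ) := by
  rw [Delta, PowerSeries.coeff_C_mul, map_sub, cE43_1, cE62_1]; norm_num

lemma cD_2 : coeff (R := ℚ) 2 Delta = (-24 : ℚ) := by
  rw [Delta, PowerSeries.coeff_C_mul, map_sub, cE43_2, cE62_2]; norm_num

lemma cD_3 : coeff (R := ℚ) 3 Delta = (252 : ℚ) := by
  rw [Delta, PowerSeries.coeff_C_mul, map_sub, cE43_3, cE62_3]; norm_num

lemma cD_4 : coeff (R := ℚ) 4 Delta = (-1472 : ℚ) := by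
  rw [Delta, PowerSeries.coeff_C_mul, map_sub, cE43_4, cE62_4]; norm_num

lemma cD_5 : coeff (R := ℚ) 5 Delta = (4830 : ℚ) := by
  rw [Delta, PowerSeries.coeff_C_mul, map_sub, cE43_5, cE62_5]; norm_num

lemma cD_6 : coeff (R := ℚ) 6 Delta = (-6048 : ℚ) := by
  rw [Delta, PowerSeries.coeff_C_mul, map_sub, cE43_6, cE62_6]; norm_num

lemma cD_7 : coeff (R := ℚ) 7 Delta = (-16744 : ℚ) := by
  rw [Delta, PowerSeries.coeff_C_mul, map_sub, cE43_7, cE62_7]; norm_num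

lemma cD_8 : coeff (R := ℚ) 8 Delta = (84480 : ℚ) := by
  rw [Delta, PowerSeries.coeff_C_mul, map_sub, cE43_8, cE62_8]; norm_num

lemma cD_9 : coeff (R := ℚ) 9 Delta = (-113643 : ℚ) := by
  rw [Delta, PowerSeries.coeff_C_mul, map_sub, cE43_9, cE62_9]; norm_num

lemma cD_10 : coeff (R := ℚ) 10 Delta = (-115920 : ℚ) := by
  rw [Delta, PowerSeries.coeff_C_mul, map_sub, cE43_10, cE62_10]; norm_num

lemma cD_11 : coeff (R := ℚ) 11 Delta = (534612 : ℚ) := by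
  rw [Delta, PowerSeries.coeff_C_mul, map_sub, cE43_11, cE62_11]; norm_num

lemma cD_12 : coeff (R := ℚ) 12 Delta = (-370944 : ℚ) := by
  rw [Delta, PowerSeries.coeff_C_mul, map_sub, cE43_12, cE62_12]; norm_num

lemma cD_13 : coeff (R := ℚ) 13 Delta = (-577738 : ℚ) := by
  rw [Delta, PowerSeries.coeff_C_mul, map_sub, cE43_13, cE62_13]; norm_num

section NUM

variable (f : PowerSeries ℚ) (hf : f * Delta = Vop 2 Delta)

include hf

lemma cf_0 : coeff (R := ℚ) 0 f = (0 : ℚ) := by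
  rw [PowerSeries.coeff_zero_eq_constantCoeff]
  have h := congrArg (coeff (R := ℚ) 1) hf
  rw [PowerSeries.coeff_mul, Finset.Nat.sum_antidiagonal_eq_sum_range_succ_mk, coeff_Vop] at h
  simp only [Finset.sum_range_succ, Finset.sum_range_zero] at h
  norm_num [cD_0, cD_1] at h
  linarith

lemma cf_1 : coeff (R := ℚ) 1 f = (1 : ℚ) := by
  have h := congrArg (coeff (R := ℚ) 2) hf
  rw [PowerSeries.coeff_mul, Finset.Nat.sum_antidiagonal_eq_sum_range_succ_mk, coeff_Vop] at h
  simp only [Finset.sum_range_succ, Finset.sum_range_zero] at h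
  norm_num [cD_0, cD_1, cD_2, cf_0 f hf] at h
  linarith

lemma cf_2 : coeff (R := ℚ) 2 f = (24 : ℚ) := by
  have h := congrArg (coeff (R := ℚ) 3) hf
  rw [PowerSeries.coeff_mul, Finset.Nat.sum_antidiagonal_eq_sum_range_succ_mk, coeff_Vop] at h
  simp only [Finset.sum_range_succ, Finset.sum_range_zero] at h
  norm_num [cD_0, cD_1, cD_2, cD_3, cf_0 f hf, cf_1 f hf] at h
  linarith

lemma cf_3 : coeff (R := ℚ) 3 f = (300 : ℚ) := by
  have h := congrArg (coeff (R := ℚ) 4) hf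
  rw [PowerSeries.coeff_mul, Finset.Nat.sum_antidiagonal_eq_sum_range_succ_mk, coeff_Vop] at h
  simp only [Finset.sum_range_succ, Finset.sum_range_zero] at h
  norm_num [cD_0, cD_1, cD_2, cD_3, cD_4, cf_0 f hf, cf_1 f hf, cf_2 f hf] at h
  linarith

lemma cf_4 : coeff (R := ℚ) 4 f = (2624 : ℚ) := by
  have h := congrArg (coeff (R := ℚ) 5) hf
  rw [PowerSeries.coeff_mul, Finset.Nat.sum_antidiagonal_eq_sum_range_succ_mk, coeff_Vop] at h
  simp only [Finset.sum_range_succ, Finset.sum_range_zero] at h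
  norm_num [cD_0, cD_1, cD_2, cD_3, cD_4, cD_5, cf_0 f hf, cf_1 f hf, cf_2 f hf, cf_3 f hf] at h
  linarith

lemma cf_5 : coeff (R := ℚ) 5 f = (18126 : ℚ) := by
  have h := congrArg (coeff (R := ℚ) 6) hf
  rw [PowerSeries.coeff_mul, Finset.Nat.sum_antidiagonal_eq_sum_range_succ_mk, coeff_Vop] at h
  simp only [Finset.sum_range_succ, Finset.sum_range_zero] at h
  norm_num [cD_0, cD_1, cD_2, cD_3, cD_4, cD_5, cD_6, cf_0 f hf, cf_1 f hf, cf_2 f hf, cf_3 f hf, cf_4 f hf] at h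
  linarith

lemma cf_6 : coeff (R := ℚ) 6 f = (105504 : ℚ) := by
  have h := congrArg (coeff (R := ℚ) 7) hf
  rw [PowerSeries.coeff_mul, Finset.Nat.sum_antidiagonal_eq_sum_range_succ_mk, coeff_Vop] at h
  simp only [Finset.sum_range_succ, Finset.sum_range_zero] at h
  norm_num [cD_0, cD_1, cD_2, cD_3, cD_4, cD_5, cD_6, cD_7, cf_0 f hf, cf_1 f hf, cf_2 f hf, cf_3 f hf, cf_4 f hf, cf_5 f hf] at h
  linarith

lemma cf_7 : coeff (R := ℚ) 7 f = (538296 : ℚ) := by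
  have h := congrArg (coeff (R := ℚ) 8) hf
  rw [PowerSeries.coeff_mul, Finset.Nat.sum_antidiagonal_eq_sum_range_succ_mk, coeff_Vop] at h
  simp only [Finset.sum_range_succ, Finset.sum_range_zero] at h
  norm_num [cD_0, cD_1, cD_2, cD_3, cD_4, cD_5, cD_6, cD_7, cD_8, cf_0 f hf, cf_1 f hf, cf_2 f hf, cf_3 f hf, cf_4 f hf, cf_5 f hf, cf_6 f hf] at h
  linarith

lemma cf_8 : coeff (R := ℚ) 8 f = (2471424 : ℚ) := by
  have h := congrArg (coeff (R := ℚ) 9) hf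
  rw [PowerSeries.coeff_mul, Finset.Nat.sum_antidiagonal_eq_sum_range_succ_mk, coeff_Vop] at h
  simp only [Finset.sum_range_succ, Finset.sum_range_zero] at h
  norm_num [cD_0, cD_1, cD_2, cD_3, cD_4, cD_5, cD_6, cD_7, cD_8, cD_9, cf_0 f hf, cf_1 f hf, cf_2 f hf, cf_3 f hf, cf_4 f hf, cf_5 f hf, cf_6 f hf, cf_7 f hf] at h
  linarith

lemma cf_9 : coeff (R := ℚ) 9 f = (10400997 : ℚ) := by
  have h := congrArg (coeff (R := ℚ) 10) hf
  rw [PowerSeries.coeff_mul, Finset.Nat.sum_antidiagonal_eq_sum_range_succ_mk, coeff_Vop] at h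
  simp only [Finset.sum_range_succ, Finset.sum_range_zero] at h
  norm_num [cD_0, cD_1, cD_2, cD_3, cD_4, cD_5, cD_6, cD_7, cD_8, cD_9, cD_10, cf_0 f hf, cf_1 f hf, cf_2 f hf, cf_3 f hf, cf_4 f hf, cf_5 f hf, cf_6 f hf, cf_7 f hf, cf_8 f hf] at h
  linarith

lemma cf_10 : coeff (R := ℚ) 10 f = (40674128 : ℚ) := by
  have h := congrArg (coeff (R := ℚ) 11) hf
  rw [PowerSeries.coeff_mul, Finset.Nat.sum_antidiagonal_eq_sum_range_succ_mk, coeff_Vop] at h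
  simp only [Finset.sum_range_succ, Finset.sum_range_zero] at h
  norm_num [cD_0, cD_1, cD_2, cD_3, cD_4, cD_5, cD_6, cD_7, cD_8, cD_9, cD_10, cD_11, cf_0 f hf, cf_1 f hf, cf_2 f hf, cf_3 f hf, cf_4 f hf, cf_5 f hf, cf_6 f hf, cf_7 f hf, cf_8 f hf, cf_9 f hf] at h
  linarith

lemma cf_11 : coeff (R := ℚ) 11 f = (149343012 : ℚ) := by
  have h := congrArg (coeff (R := ℚ) 12) hf
  rw [PowerSeries.coeff_mul, Finset.Nat.sum_antidiagonal_eq_sum_range_succ_mk, coeff_Vop] at h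
  simp only [Finset.sum_range_succ, Finset.sum_range_zero] at h
  norm_num [cD_0, cD_1, cD_2, cD_3, cD_4, cD_5, cD_6, cD_7, cD_8, cD_9, cD_10, cD_11, cD_12, cf_0 f hf, cf_1 f hf, cf_2 f hf, cf_3 f hf, cf_4 f hf, cf_5 f hf, cf_6 f hf, cf_7 f hf, cf_8 f hf, cf_9 f hf, cf_10 f hf] at h
  linarith

lemma cf_12 : coeff (R := ℚ) 12 f = (519045888 : ℚ) := by
  have h := congrArg (coeff (R := ℚ) 13) hf
  rw [PowerSeries.coeff_mul, Finset.Nat.sum_antidiagonal_eq_sum_range_succ_mk, coeff_Vop] at h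
  simp only [Finset.sum_range_succ, Finset.sum_range_zero] at h
  norm_num [cD_0, cD_1, cD_2, cD_3, cD_4, cD_5, cD_6, cD_7, cD_8, cD_9, cD_10, cD_11, cD_12, cD_13, cf_0 f hf, cf_1 f hf, cf_2 f hf, cf_3 f hf, cf_4 f hf, cf_5 f hf, cf_6 f hf, cf_7 f hf, cf_8 f hf, cf_9 f hf, cf_10 f hf, cf_11 f hf] at h
  linarith

lemma cff_0 : coeff (R := ℚ) 0 (f*f) = (0 : ℚ) := by
  rw [PowerSeries.coeff_mul, Finset.Nat.sum_antidiagonal_eq_sum_range_succ_mk]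
  simp only [Finset.sum_range_succ, Finset.sum_range_zero]
  norm_num [cf_0 f hf]

lemma cff_1 : coeff (R := ℚ) 1 (f*f) = (0 : ℚ) := by
  rw [PowerSeries.coeff_mul, Finset.Nat.sum_antidiagonal_eq_sum_range_succ_mk]
  simp only [Finset.sum_range_succ, Finset.sum_range_zero]
  norm_num [cf_0 f hf, cf_1 f hf]

lemma cff_2 : coeff (R := ℚ) 2 (f*f) = (1 : ℚ) := by
  rw [PowerSeries.coeff_mul, Finset.Nat.sum_antidiagonal_eq_sum_range_succ_mk]
  simp only [Finset.sum_range_succ, Finset.sum_range_zero]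
  norm_num [cf_0 f hf, cf_1 f hf, cf_2 f hf]

lemma cff_3 : coeff (R := ℚ) 3 (f*f) = (48 : ℚ) := by
  rw [PowerSeries.coeff_mul, Finset.Nat.sum_antidiagonal_eq_sum_range_succ_mk]
  simp only [Finset.sum_range_succ, Finset.sum_range_zero]
  norm_num [cf_0 f hf, cf_1 f hf, cf_2 f hf, cf_3 f hf]

lemma cff_4 : coeff (R := ℚ) 4 (f*f) = (1176 : ℚ) := by
  rw [PowerSeries.coeff_mul, Finset.Nat.sum_antidiagonal_eq_sum_range_succ_mk]
  simp only [Finset.sum_range_succ, Finset.sum_range_zero]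
  norm_num [cf_0 f hf, cf_1 f hf, cf_2 f hf, cf_3 f hf, cf_4 f hf]

lemma cff_5 : coeff (R := ℚ) 5 (f*f) = (19648 : ℚ) := by
  rw [PowerSeries.coeff_mul, Finset.Nat.sum_antidiagonal_eq_sum_range_succ_mk]
  simp only [Finset.sum_range_succ, Finset.sum_range_zero]
  norm_num [cf_0 f hf, cf_1 f hf, cf_2 f hf, cf_3 f hf, cf_4 f hf, cf_5 f hf]

lemma cff_6 : coeff (R := ℚ) 6 (f*f) = (252204 : ℚ) := by
  rw [PowerSeries.coeff_mul, Finset.Nat.sum_antidiagonal_eq_sum_range_succ_mk]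
  simp only [Finset.sum_range_succ, Finset.sum_range_zero]
  norm_num [cf_0 f hf, cf_1 f hf, cf_2 f hf, cf_3 f hf, cf_4 f hf, cf_5 f hf, cf_6 f hf]

lemma cff_7 : coeff (R := ℚ) 7 (f*f) = (2655456 : ℚ) := by
  rw [PowerSeries.coeff_mul, Finset.Nat.sum_antidiagonal_eq_sum_range_succ_mk]
  simp only [Finset.sum_range_succ, Finset.sum_range_zero]
  norm_num [cf_0 f hf, cf_1 f hf, cf_2 f hf, cf_3 f hf, cf_4 f hf, cf_5 f hf, cf_6 f hf, cf_7 f hf]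

lemma cff_8 : coeff (R := ℚ) 8 (f*f) = (23901760 : ℚ) := by
  rw [PowerSeries.coeff_mul, Finset.Nat.sum_antidiagonal_eq_sum_range_succ_mk]
  simp only [Finset.sum_range_succ, Finset.sum_range_zero]
  norm_num [cf_0 f hf, cf_1 f hf, cf_2 f hf, cf_3 f hf, cf_4 f hf, cf_5 f hf, cf_6 f hf, cf_7 f hf, cf_8 f hf]

lemma cff_9 : coeff (R := ℚ) 9 (f*f) = (189208704 : ℚ) := by
  rw [PowerSeries.coeff_mul, Finset.Nat.sum_antidiagonal_eq_sum_range_succ_mk]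
  simp only [Finset.sum_range_succ, Finset.sum_range_zero]
  norm_num [cf_0 f hf, cf_1 f hf, cf_2 f hf, cf_3 f hf, cf_4 f hf, cf_5 f hf, cf_6 f hf, cf_7 f hf, cf_8 f hf, cf_9 f hf]

lemma cff_10 : coeff (R := ℚ) 10 (f*f) = (1344644814 : ℚ) := by
  rw [PowerSeries.coeff_mul, Finset.Nat.sum_antidiagonal_eq_sum_range_succ_mk]
  simp only [Finset.sum_range_succ, Finset.sum_range_zero]
  norm_num [cf_0 f hf, cf_1 f hf, cf_2 f hf, cf_3 f hf, cf_4 f hf, cf_5 f hf, cf_6 f hf, cf_7 f hf, cf_8 f hf, cf_9 f hf, cf_10 f hf]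

lemma cff_11 : coeff (R := ℚ) 11 (f*f) = (8713158928 : ℚ) := by
  rw [PowerSeries.coeff_mul, Finset.Nat.sum_antidiagonal_eq_sum_range_succ_mk]
  simp only [Finset.sum_range_succ, Finset.sum_range_zero]
  norm_num [cf_0 f hf, cf_1 f hf, cf_2 f hf, cf_3 f hf, cf_4 f hf, cf_5 f hf, cf_6 f hf, cf_7 f hf, cf_8 f hf, cf_9 f hf, cf_10 f hf, cf_11 f hf]

lemma cff_12 : coeff (R := ℚ) 12 (f*f) = (52107076128 : ℚ) := by
  rw [PowerSeries.coeff_mul, Finset.Nat.sum_antidiagonal_eq_sum_range_succ_mk]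
  simp only [Finset.sum_range_succ, Finset.sum_range_zero]
  norm_num [cf_0 f hf, cf_1 f hf, cf_2 f hf, cf_3 f hf, cf_4 f hf, cf_5 f hf, cf_6 f hf, cf_7 f hf, cf_8 f hf, cf_9 f hf, cf_10 f hf, cf_11 f hf, cf_12 f hf]

lemma cg_0 : coeff (R := ℚ) 0 (gg f) = 0 := by
  rw [gg, show (Vop 2 f)^2 = Vop 2 (f*f) from by rw [pow_two, ← Vop_mul], show f^2 = f*f from by ring]
  simp only [map_sub, PowerSeries.coeff_C_mul]
  rw [cff_0 f hf, PowerSeries.coeff_mul, PowerSeries.coeff_mul,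
    Finset.Nat.sum_antidiagonal_eq_sum_range_succ_mk, Finset.Nat.sum_antidiagonal_eq_sum_range_succ_mk]
  simp only [Finset.sum_range_succ, Finset.sum_range_zero, coeff_Vop]
  norm_num [cf_0 f hf, cff_0 f hf]

lemma cg_1 : coeff (R := ℚ) 1 (gg f) = 0 := by
  rw [gg, show (Vop 2 f)^2 = Vop 2 (f*f) from by rw [pow_two, ← Vop_mul], show f^2 = f*f from by ring]
  simp only [map_sub, PowerSeries.coeff_C_mul]
  rw [cff_1 f hf, PowerSeries.coeff_mul, PowerSeries.coeff_mul,
    Finset.Nat.sum_antidiagonal_eq_sum_range_succ_mk, Finset.Nat.sum_antidiagonal_eq_sum_range_succ_mk]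
  simp only [Finset.sum_range_succ, Finset.sum_range_zero, coeff_Vop]
  norm_num [cf_0 f hf, cf_1 f hf, cff_0 f hf, cff_1 f hf]

lemma cg_2 : coeff (R := ℚ) 2 (gg f) = 0 := by
  rw [gg, show (Vop 2 f)^2 = Vop 2 (f*f) from by rw [pow_two, ← Vop_mul], show f^2 = f*f from by ring]
  simp only [map_sub, PowerSeries.coeff_C_mul]
  rw [cff_2 f hf, PowerSeries.coeff_mul, PowerSeries.coeff_mul,
    Finset.Nat.sum_antidiagonal_eq_sum_range_succ_mk, Finset.Nat.sum_antidiagonal_eq_sum_range_succ_mk]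
  simp only [Finset.sum_range_succ, Finset.sum_range_zero, coeff_Vop]
  norm_num [cf_0 f hf, cf_1 f hf, cf_2 f hf, cff_0 f hf, cff_1 f hf, cff_2 f hf]

lemma cg_3 : coeff (R := ℚ) 3 (gg f) = 0 := by
  rw [gg, show (Vop 2 f)^2 = Vop 2 (f*f) from by rw [pow_two, ← Vop_mul], show f^2 = f*f from by ring]
  simp only [map_sub, PowerSeries.coeff_C_mul]
  rw [cff_3 f hf, PowerSeries.coeff_mul, PowerSeries.coeff_mul,
    Finset.Nat.sum_antidiagonal_eq_sum_range_succ_mk, Finset.Nat.sum_antidiagonal_eq_sum_range_succ_mk]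
  simp only [Finset.sum_range_succ, Finset.sum_range_zero, coeff_Vop]
  norm_num [cf_0 f hf, cf_1 f hf, cf_2 f hf, cf_3 f hf, cff_0 f hf, cff_1 f hf, cff_2 f hf, cff_3 f hf]

lemma cg_4 : coeff (R := ℚ) 4 (gg f) = 0 := by
  rw [gg, show (Vop 2 f)^2 = Vop 2 (f*f) from by rw [pow_two, ← Vop_mul], show f^2 = f*f from by ring]
  simp only [map_sub, PowerSeries.coeff_C_mul]
  rw [cff_4 f hf, PowerSeries.coeff_mul, PowerSeries.coeff_mul,
    Finset.Nat.sum_antidiagonal_eq_sum_range_succ_mk, Finset.Nat.sum_antidiagonal_eq_sum_range_succ_mk]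
  simp only [Finset.sum_range_succ, Finset.sum_range_zero, coeff_Vop]
  norm_num [cf_0 f hf, cf_1 f hf, cf_2 f hf, cf_3 f hf, cf_4 f hf, cff_0 f hf, cff_1 f hf, cff_2 f hf, cff_3 f hf, cff_4 f hf]

lemma cg_5 : coeff (R := ℚ) 5 (gg f) = 0 := by
  rw [gg, show (Vop 2 f)^2 = Vop 2 (f*f) from by rw [pow_two, ← Vop_mul], show f^2 = f*f from by ring]
  simp only [map_sub, PowerSeries.coeff_C_mul]
  rw [cff_5 f hf, PowerSeries.coeff_mul, PowerSeries.coeff_mul,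
    Finset.Nat.sum_antidiagonal_eq_sum_range_succ_mk, Finset.Nat.sum_antidiagonal_eq_sum_range_succ_mk]
  simp only [Finset.sum_range_succ, Finset.sum_range_zero, coeff_Vop]
  norm_num [cf_0 f hf, cf_1 f hf, cf_2 f hf, cf_3 f hf, cf_4 f hf, cf_5 f hf, cff_0 f hf, cff_1 f hf, cff_2 f hf, cff_3 f hf, cff_4 f hf, cff_5 f hf]

lemma cg_6 : coeff (R := ℚ) 6 (gg f) = 0 := by
  rw [gg, show (Vop 2 f)^2 = Vop 2 (f*f) from by rw [pow_two, ← Vop_mul], show f^2 = f*f from by ring]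
  simp only [map_sub, PowerSeries.coeff_C_mul]
  rw [cff_6 f hf, PowerSeries.coeff_mul, PowerSeries.coeff_mul,
    Finset.Nat.sum_antidiagonal_eq_sum_range_succ_mk, Finset.Nat.sum_antidiagonal_eq_sum_range_succ_mk]
  simp only [Finset.sum_range_succ, Finset.sum_range_zero, coeff_Vop]
  norm_num [cf_0 f hf, cf_1 f hf, cf_2 f hf, cf_3 f hf, cf_4 f hf, cf_5 f hf, cf_6 f hf, cff_0 f hf, cff_1 f hf, cff_2 f hf, cff_3 f hf, cff_4 f hf, cff_5 f hf, cff_6 f hf]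

lemma cg_7 : coeff (R := ℚ) 7 (gg f) = 0 := by
  rw [gg, show (Vop 2 f)^2 = Vop 2 (f*f) from by rw [pow_two, ← Vop_mul], show f^2 = f*f from by ring]
  simp only [map_sub, PowerSeries.coeff_C_mul]
  rw [cff_7 f hf, PowerSeries.coeff_mul, PowerSeries.coeff_mul,
    Finset.Nat.sum_antidiagonal_eq_sum_range_succ_mk, Finset.Nat.sum_antidiagonal_eq_sum_range_succ_mk]
  simp only [Finset.sum_range_succ, Finset.sum_range_zero, coeff_Vop]
  norm_num [cf_0 f hf, cf_1 f hf, cf_2 f hf, cf_3 f hf, cf_4 f hf, cf_5 f hf, cf_6 f hf, cf_7 f hf, cff_0 f hf, cff_1 f hf, cff_2 f hf, cff_3 f hf, cff_4 f hf, cff_5 f hf, cff_6 f hf, cff_7 f hf]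

lemma cg_8 : coeff (R := ℚ) 8 (gg f) = 0 := by
  rw [gg, show (Vop 2 f)^2 = Vop 2 (f*f) from by rw [pow_two, ← Vop_mul], show f^2 = f*f from by ring]
  simp only [map_sub, PowerSeries.coeff_C_mul]
  rw [cff_8 f hf, PowerSeries.coeff_mul, PowerSeries.coeff_mul,
    Finset.Nat.sum_antidiagonal_eq_sum_range_succ_mk, Finset.Nat.sum_antidiagonal_eq_sum_range_succ_mk]
  simp only [Finset.sum_range_succ, Finset.sum_range_zero, coeff_Vop]
  norm_num [cf_0 f hf, cf_1 f hf, cf_2 f hf, cf_3 f hf, cf_4 f hf, cf_5 f hf, cf_6 f hf, cf_7 f hf, cf_8 f hf, cff_0 f hf, cff_1 f hf, cff_2 f hf, cff_3 f hf, cff_4 f hf, cff_5 f hf, cff_6 f hf, cff_7 f hf, cff_8 f hf]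

lemma cg_9 : coeff (R := ℚ) 9 (gg f) = 0 := by
  rw [gg, show (Vop 2 f)^2 = Vop 2 (f*f) from by rw [pow_two, ← Vop_mul], show f^2 = f*f from by ring]
  simp only [map_sub, PowerSeries.coeff_C_mul]
  rw [cff_9 f hf, PowerSeries.coeff_mul, PowerSeries.coeff_mul,
    Finset.Nat.sum_antidiagonal_eq_sum_range_succ_mk, Finset.Nat.sum_antidiagonal_eq_sum_range_succ_mk]
  simp only [Finset.sum_range_succ, Finset.sum_range_zero, coeff_Vop]
  norm_num [cf_0 f hf, cf_1 f hf, cf_2 f hf, cf_3 f hf, cf_4 f hf, cf_5 f hf, cf_6 f hf, cf_7 f hf, cf_8 f hf, cf_9 f hf, cff_0 f hf, cff_1 f hf, cff_2 f hf, cff_3 f hf, cff_4 f hf, cff_5 f hf, cff_6 f hf, cff_7 f hf, cff_8 f hf, cff_9 f hf]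

lemma cg_10 : coeff (R := ℚ) 10 (gg f) = 0 := by
  rw [gg, show (Vop 2 f)^2 = Vop 2 (f*f) from by rw [pow_two, ← Vop_mul], show f^2 = f*f from by ring]
  simp only [map_sub, PowerSeries.coeff_C_mul]
  rw [cff_10 f hf, PowerSeries.coeff_mul, PowerSeries.coeff_mul,
    Finset.Nat.sum_antidiagonal_eq_sum_range_succ_mk, Finset.Nat.sum_antidiagonal_eq_sum_range_succ_mk]
  simp only [Finset.sum_range_succ, Finset.sum_range_zero, coeff_Vop]
  norm_num [cf_0 f hf, cf_1 f hf, cf_2 f hf, cf_3 f hf, cf_4 f hf, cf_5 f hf, cf_6 f hf, cf_7 f hf, cf_8 f hf, cf_9 f hf, cf_10 f hf, cff_0 f hf, cff_1 f hf, cff_2 f hf, cff_3 f hf, cff_4 f hf, cff_5 f hf, cff_6 f hf, cff_7 f hf, cff_8 f hf, cff_9 f hf, cff_10 f hf]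

lemma cg_11 : coeff (R := ℚ) 11 (gg f) = 0 := by
  rw [gg, show (Vop 2 f)^2 = Vop 2 (f*f) from by rw [pow_two, ← Vop_mul], show f^2 = f*f from by ring]
  simp only [map_sub, PowerSeries.coeff_C_mul]
  rw [cff_11 f hf, PowerSeries.coeff_mul, PowerSeries.coeff_mul,
    Finset.Nat.sum_antidiagonal_eq_sum_range_succ_mk, Finset.Nat.sum_antidiagonal_eq_sum_range_succ_mk]
  simp only [Finset.sum_range_succ, Finset.sum_range_zero, coeff_Vop]
  norm_num [cf_0 f hf, cf_1 f hf, cf_2 f hf, cf_3 f hf, cf_4 f hf, cf_5 f hf, cf_6 f hf, cf_7 f hf, cf_8 f hf, cf_9 f hf, cf_10 f hf, cf_11 f hf, cff_0 f hf, cff_1 f hf, cff_2 f hf, cff_3 f hf, cff_4 f hf, cff_5 f hf, cff_6 f hf, cff_7 f hf, cff_8 f hf, cff_9 f hf, cff_10 f hf, cff_11 f hf]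

lemma cg_12 : coeff (R := ℚ) 12 (gg f) = 0 := by
  rw [gg, show (Vop 2 f)^2 = Vop 2 (f*f) from by rw [pow_two, ← Vop_mul], show f^2 = f*f from by ring]
  simp only [map_sub, PowerSeries.coeff_C_mul]
  rw [cff_12 f hf, PowerSeries.coeff_mul, PowerSeries.coeff_mul,
    Finset.Nat.sum_antidiagonal_eq_sum_range_succ_mk, Finset.Nat.sum_antidiagonal_eq_sum_range_succ_mk]
  simp only [Finset.sum_range_succ, Finset.sum_range_zero, coeff_Vop]
  norm_num [cf_0 f hf, cf_1 f hf, cf_2 f hf, cf_3 f hf, cf_4 f hf, cf_5 f hf, cf_6 f hf, cf_7 f hf, cf_8 f hf, cf_9 f hf, cf_10 f hf, cf_11 f hf, cf_12 f hf, cff_0 f hf, cff_1 f hf, cff_2 f hf, cff_3 f hf, cff_4 f hf, cff_5 f hf, cff_6 f hf, cff_7 f hf, cff_8 f hf, cff_9 f hf, cff_10 f hf, cff_11 f hf, cff_12 f hf]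


end NUM

lemma Uop_zero : Uop 2 (0 : PowerSeries ℚ) = 0 := by
  ext n; rw [coeff_Uop]; simp

lemma coeff_mul_zero_right (h g : PowerSeries ℚ) (l : ℕ)
    (hg : ∀ b, b ≤ l → coeff (R := ℚ) b g = 0) : coeff (R := ℚ) l (h * g) = 0 := by
  rw [PowerSeries.coeff_mul]
  refine Finset.sum_eq_zero (fun p hp => ?_)
  rw [Finset.HasAntidiagonal.mem_antidiagonal] at hp
  rw [hg p.2 (by omega), mul_zero]

lemma conv_lead (f g : PowerSeries ℚ) (h0 : coeff (R := ℚ) 0 f = 0) (h1 : coeff (R := ℚ) 1 f = 1)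
    (N : ℕ) (hmin : ∀ m, m < N → coeff (R := ℚ) m g = 0) :
    coeff (R := ℚ) (N+1) (f * g) = coeff (R := ℚ) N g := by
  rw [PowerSeries.coeff_mul]
  rw [Finset.sum_eq_single (1, N)]
  · rw [h1, one_mul]
  · rintro ⟨x, y⟩ hxy hne
    rw [Finset.HasAntidiagonal.mem_antidiagonal] at hxy
    simp only at hxy
    rcases Nat.lt_or_ge y N with h | h
    · rw [hmin y h, mul_zero]
    · have hne' : ¬(x = 1 ∧ y = N) := by
        rintro ⟨hx, hy⟩; exact hne (by rw [hx, hy])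
      have hx0 : x = 0 := by omega
      simp only [hx0]
      rw [h0, zero_mul]
  · intro hmem
    exact absurd (Finset.HasAntidiagonal.mem_antidiagonal.mpr (by omega)) hmem

lemma gg_eq_zero (f : PowerSeries ℚ) (hf1 : coeff (R := ℚ) 1 f = 1)
    (hf : f * Delta = Vop 2 Delta)
    (u : ℤ → ℤ → ℚ)
    (hu : ∀ j : ℕ, 1 ≤ j →
      Uop 2 (f ^ j) = ∑ i ∈ Finset.Icc 1 (2 * j), C (R := ℚ) (u (i : ℤ) (j : ℤ)) * f ^ i) :
    gg f = 0 := by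
  have h0 : coeff (R := ℚ) 0 f = 0 := cf_0 f hf
  have hu1 : Uop 2 f = C (R := ℚ) (u 1 1) * f + C (R := ℚ) (u 2 1) * f^2 := by
    have h := hu 1 le_rfl
    rw [pow_one] at h
    rw [h, show (Finset.Icc 1 (2*1) : Finset ℕ) = {1, 2} from by decide]
    norm_num [Finset.sum_insert, Finset.mem_singleton, Finset.sum_singleton]
  have hu2 : Uop 2 (f^2) = C (R := ℚ) (u 1 2) * f + C (R := ℚ) (u 2 2) * f^2 + C (R := ℚ) (u 3 2) * f^3
      + C (R := ℚ) (u 4 2) * f^4 := by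
    have h := hu 2 (by norm_num)
    rw [h, show (Finset.Icc 1 (2*2) : Finset ℕ) = {1, 2, 3, 4} from by decide]
    norm_num [Finset.sum_insert, Finset.mem_insert, Finset.mem_singleton, Finset.sum_singleton]
    ring
  have hu3 : Uop 2 (f^3) = C (R := ℚ) (u 1 3) * f + C (R := ℚ) (u 2 3) * f^2 + C (R := ℚ) (u 3 3) * f^3
      + C (R := ℚ) (u 4 3) * f^4 + C (R := ℚ) (u 5 3) * f^5 + C (R := ℚ) (u 6 3) * f^6 := by
    have h := hu 3 (by norm_num)
    rw [h, show (Finset.Icc 1 (2*3) : Finset ℕ) = {1, 2, 3, 4, 5, 6} from by decide]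
    norm_num [Finset.sum_insert, Finset.mem_insert, Finset.mem_singleton, Finset.sum_singleton]
    ring
  have hcoeffs : ∀ N, coeff (R := ℚ) N (gg f) = 0 := by
    intro N
    induction N using Nat.strong_induction_on with
    | _ N hmin =>
      rcases Nat.lt_or_ge N 13 with hN | hN
      · interval_cases N
        · exact cg_0 f hf
        · exact cg_1 f hf
        · exact cg_2 f hf
        · exact cg_3 f hf
        · exact cg_4 f hf
        · exact cg_5 f hf
        · exact cg_6 f hf
        · exact cg_7 f hf
        · exact cg_8 f hf
        · exact cg_9 f hf
        · exact cg_10 f hf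
        · exact cg_11 f hf
        · exact cg_12 f hf
      · rcases Nat.even_or_odd N with ⟨t, ht⟩ | ⟨t, ht⟩
        · -- even case
          have hS0z : Uop 2 (gg f) = 0 := by
            refine span_vanish f h0 hf1 6
              (fun i => if i = 1 then u 1 2 - 1 else if i = 2 then u 2 2 - 48*u 1 1
                else if i = 3 then u 3 2 - 48*u 2 1 - 4096*u 1 1
                else if i = 4 then u 4 2 - 4096*u 2 1 else 0) _ ?_ ?_
            · rw [gg, show (Vop 2 f)^2 = Vop 2 (f*f) from by rw [pow_two, ← Vop_mul]]
              rw [Uop_sub, Uop_sub, Uop_sub, Uop_Cmul, Uop_Cmul, Uop_Vop,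
                Uop_mul_Vop, Uop_mul_Vop, hu1, hu2]
              simp only [Finset.sum_range_succ, Finset.sum_range_zero]
              norm_num
              simp only [map_sub, map_mul, map_ofNat, map_one]
              ring
            · intro k hk
              rw [coeff_Uop]
              exact hmin (2*k) (by omega)
          have h2 : coeff (R := ℚ) (2*t) (gg f) = 0 := by
            rw [← coeff_Uop, hS0z, map_zero]
          rw [show N = 2*t from by omega]
          exact h2
        · -- odd case
          have hS1z : Uop 2 (f * gg f) = 0 := by
            refine span_vanish f h0 hf1 6
              (fun i => if i = 1 then u 1 3 else if i = 2 then u 2 3 - u 1 1 - 48*u 1 2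
                else if i = 3 then u 3 3 - u 2 1 - 48*u 2 2 - 4096*u 1 2
                else if i = 4 then u 4 3 - 48*u 3 2 - 4096*u 2 2
                else if i = 5 then u 5 3 - 48*u 4 2 - 4096*u 3 2
                else if i = 6 then u 6 3 - 4096*u 4 2 else 0) _ ?_ ?_
            · have e : f * gg f = f^3 - f * Vop 2 f - C (R := ℚ) 48 * (f^2 * Vop 2 f)
                  - C (R := ℚ) 4096 * (f^2 * Vop 2 (f*f)) := by
                rw [gg, show (Vop 2 f)^2 = Vop 2 (f*f) from by rw [pow_two, ← Vop_mul]]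
                ring
              rw [e, Uop_sub, Uop_sub, Uop_sub, Uop_Cmul, Uop_Cmul,
                Uop_mul_Vop, Uop_mul_Vop, Uop_mul_Vop, hu1, hu2, hu3]
              simp only [Finset.sum_range_succ, Finset.sum_range_zero]
              norm_num
              simp only [map_sub, map_mul, map_ofNat, map_one]
              ring
            · intro k hk
              rw [coeff_Uop]
              exact coeff_mul_zero_right f (gg f) (2*k) (fun b hb => hmin b (by omega))
          have h2 : coeff (R := ℚ) (2*(t+1)) (f * gg f) = 0 := by
            rw [← coeff_Uop, hS1z, map_zero]
          rw [show 2*(t+1) = N+1 from by omega] at h2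
          have h3 := conv_lead f (gg f) h0 hf1 N hmin
          rw [show N = 2*t+1 from by omega]
          rw [show 2*t+1 = N from by omega]
          rw [← h3]
          exact h2
  ext n
  rw [hcoeffs n, map_zero]

section FINAL

variable (f : PowerSeries ℚ) (u : ℤ → ℤ → ℚ)

lemma icc_rangeU (M : ℕ) (J : ℤ) (h : u 0 J = 0) :
    ∑ i ∈ Finset.Icc 1 M, C (R := ℚ) (u (i:ℤ) J) * f^i
      = ∑ i ∈ range (M+1), C (R := ℚ) (u (i:ℤ) J) * f^i := by
  rw [show range (M+1) = insert 0 (Finset.Icc 1 M) from by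
    ext x; simp [Finset.mem_range, Finset.mem_insert, Finset.mem_Icc]; omega]
  rw [Finset.sum_insert (by simp)]
  simp [h]

lemma shift1U (M : ℕ) (J : ℤ) (h : ∀ i : ℤ, i ≤ 0 → u i J = 0) :
    f * ∑ i ∈ range M, C (R := ℚ) (u (i:ℤ) J) * f^i
      = ∑ i ∈ range (M+1), C (R := ℚ) (u ((i:ℤ)-1) J) * f^i := by
  rw [Finset.mul_sum, Finset.sum_range_succ']
  rw [show ((0:ℕ):ℤ) - 1 = -1 from by norm_num, h (-1) (by norm_num)]
  simp only [map_zero, zero_mul, add_zero]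
  refine Finset.sum_congr rfl (fun i _ => ?_)
  rw [show ((i+1:ℕ):ℤ) - 1 = (i:ℤ) from by push_cast; ring]
  ring

lemma shift2U (M : ℕ) (J : ℤ) (h : ∀ i : ℤ, i ≤ 0 → u i J = 0) :
    f * ∑ i ∈ range M, C (R := ℚ) (u ((i:ℤ)-1) J) * f^i
      = ∑ i ∈ range (M+1), C (R := ℚ) (u ((i:ℤ)-2) J) * f^i := by
  rw [Finset.mul_sum, Finset.sum_range_succ']
  rw [show ((0:ℕ):ℤ) - 2 = -2 from by norm_num, h (-2) (by norm_num)]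
  simp only [map_zero, zero_mul, add_zero]
  refine Finset.sum_congr rfl (fun i _ => ?_)
  rw [show ((i+1:ℕ):ℤ) - 2 = (i:ℤ) - 1 from by push_cast; ring]
  ring

lemma pad1U (M K : ℕ) (hMK : M ≤ K) (J : ℤ)
    (hv : ∀ i : ℕ, M ≤ i → u ((i:ℤ)-1) J = 0) :
    ∑ i ∈ range M, C (R := ℚ) (u ((i:ℤ)-1) J) * f^i
      = ∑ i ∈ range K, C (R := ℚ) (u ((i:ℤ)-1) J) * f^i := by
  refine Finset.sum_subset (Finset.range_subset_range.mpr hMK) (fun x hx hnx => ?_)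
  rw [hv x (by simp at hnx; omega), map_zero, zero_mul]

lemma pad2U (M K : ℕ) (hMK : M ≤ K) (J : ℤ)
    (hv : ∀ i : ℕ, M ≤ i → u ((i:ℤ)-2) J = 0) :
    ∑ i ∈ range M, C (R := ℚ) (u ((i:ℤ)-2) J) * f^i
      = ∑ i ∈ range K, C (R := ℚ) (u ((i:ℤ)-2) J) * f^i := by
  refine Finset.sum_subset (Finset.range_subset_range.mpr hMK) (fun x hx hnx => ?_)
  rw [hv x (by simp at hnx; omega), map_zero, zero_mul]

lemma cmul1U (r : ℚ) (M : ℕ) (J : ℤ) :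
    C (R := ℚ) r * ∑ i ∈ range M, C (R := ℚ) (u ((i:ℤ)-1) J) * f^i
      = ∑ i ∈ range M, C (R := ℚ) (r * u ((i:ℤ)-1) J) * f^i := by
  rw [Finset.mul_sum]
  exact Finset.sum_congr rfl (fun i _ => by rw [map_mul]; ring)

lemma cmul2U (r : ℚ) (M : ℕ) (J : ℤ) :
    C (R := ℚ) r * ∑ i ∈ range M, C (R := ℚ) (u ((i:ℤ)-2) J) * f^i
      = ∑ i ∈ range M, C (R := ℚ) (r * u ((i:ℤ)-2) J) * f^i := by
  rw [Finset.mul_sum]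
  exact Finset.sum_congr rfl (fun i _ => by rw [map_mul]; ring)

end FINAL


/-- **Kolberg/Emerton recurrence for the matrix of the 2-adic `U` operator.**
Let `u i j` be the matrix entries of `U₂` in the basis of powers of `f₂`
(so `U₂(f₂^j) = Σ_{i=1}^{2j} u_{ij} f₂^i`), extended by `u i j = 0` whenever `i ≤ 0`
or `j ≤ 0` (and `u i j = 0` for `i > 2j`, as `U₂(f₂^j)` has degree at most `2j` in `f₂`).
Then for all integers `i, j ≥ 3`:
`u i j = 48·u (i−1) (j−1) + u (i−1) (j−2) + 4096·u (i−2) (j−1)`. -/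
theorem recurrence_for_U2_matrix
    (f : PowerSeries ℚ)
    (hf1 : PowerSeries.coeff (R := ℚ) 1 f = 1)
    (hf : f * Delta = Vop 2 Delta)
    (u : ℤ → ℤ → ℚ)
    (hu_zero : ∀ i j : ℤ, i ≤ 0 ∨ j ≤ 0 → u i j = 0)
    (hu_vanish : ∀ i j : ℤ, 2 * j < i → u i j = 0)
    (hu : ∀ j : ℕ, 1 ≤ j →
      Uop 2 (f ^ j) = ∑ i ∈ Finset.Icc 1 (2 * j), PowerSeries.C (R := ℚ) (u (i : ℤ) (j : ℤ)) * f ^ i) :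
    ∀ i j : ℤ, 3 ≤ i → 3 ≤ j →
      u i j = 48 * u (i - 1) (j - 1) + u (i - 1) (j - 2) + 4096 * u (i - 2) (j - 1) := by
  intro i j hi hj
  obtain ⟨a, ha1, rfl⟩ : ∃ a : ℕ, 1 ≤ a ∧ j = (a:ℤ) + 2 := ⟨(j-2).toNat, by omega, by omega⟩
  obtain ⟨iN, rfl⟩ : ∃ n : ℕ, i = (n:ℤ) := ⟨i.toNat, by omega⟩
  have hiN : 3 ≤ iN := by exact_mod_cast hi
  have h0 : coeff (R := ℚ) 0 f = 0 := cf_0 f hf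
  have hg : gg f = 0 := gg_eq_zero f hf1 hf u hu
  rcases Nat.lt_or_ge (2*a+4) iN with hbig | hle
  · rw [hu_vanish (iN:ℤ) ((a:ℤ)+2) (by omega),
      hu_vanish ((iN:ℤ)-1) ((a:ℤ)+2-1) (by omega),
      hu_vanish ((iN:ℤ)-1) ((a:ℤ)+2-2) (by omega),
      hu_vanish ((iN:ℤ)-2) ((a:ℤ)+2-1) (by omega)]
    norm_num
  · have key : Uop 2 (f^(a+2)) = C (R := ℚ) 48 * (f * Uop 2 (f^(a+1))) + f * Uop 2 (f^a)
        + C (R := ℚ) 4096 * (f * (f * Uop 2 (f^(a+1)))) := by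
      have e : f^a * gg f = f^(a+2) - f^a * Vop 2 f - C (R := ℚ) 48 * (f^(a+1) * Vop 2 f)
          - C (R := ℚ) 4096 * (f^(a+1) * Vop 2 (f*f)) := by
        rw [gg, show (Vop 2 f)^2 = Vop 2 (f*f) from by rw [pow_two, ← Vop_mul]]
        ring
      have e0 : Uop 2 (f^a * gg f) = 0 := by rw [hg, mul_zero, Uop_zero]
      rw [e, Uop_sub, Uop_sub, Uop_sub, Uop_Cmul, Uop_Cmul,
        Uop_mul_Vop, Uop_mul_Vop, Uop_mul_Vop] at e0
      linear_combination e0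
    have hA := hu (a+2) (by omega)
    have hB := hu (a+1) (by omega)
    have hC := hu a (by omega)
    push_cast at hA hB hC
    rw [hA, hB, hC] at key
    have hz2 : u 0 ((a:ℤ)+2) = 0 := hu_zero 0 _ (Or.inl le_rfl)
    have hz1 : ∀ i : ℤ, i ≤ 0 → u i ((a:ℤ)+1) = 0 := fun i hi => hu_zero i _ (Or.inl hi)
    have hz0 : ∀ i : ℤ, i ≤ 0 → u i (a:ℤ) = 0 := fun i hi => hu_zero i _ (Or.inl hi)
    rw [icc_rangeU f u (2*(a+2)) ((a:ℤ)+2) hz2,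
      icc_rangeU f u (2*(a+1)) ((a:ℤ)+1) (hz1 0 le_rfl),
      icc_rangeU f u (2*a) (a:ℤ) (hz0 0 le_rfl)] at key
    rw [shift1U f u (2*(a+1)+1) ((a:ℤ)+1) hz1,
      shift1U f u (2*a+1) (a:ℤ) hz0,
      shift2U f u (2*(a+1)+1+1) ((a:ℤ)+1) hz1] at key
    rw [pad1U f u (2*(a+1)+1+1) (2*(a+2)+1) (by omega) ((a:ℤ)+1)
        (fun i hi => hu_vanish _ _ (by omega)),
      pad1U f u (2*a+1+1) (2*(a+2)+1) (by omega) (a:ℤ)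
        (fun i hi => hu_vanish _ _ (by omega)),
      pad2U f u (2*(a+1)+1+1+1) (2*(a+2)+1) (by omega) ((a:ℤ)+1)
        (fun i hi => hu_vanish _ _ (by omega))] at key
    rw [cmul1U f u 48 (2*(a+2)+1) ((a:ℤ)+1),
      cmul2U f u 4096 (2*(a+2)+1) ((a:ℤ)+1)] at key
    have key2 : ∑ i ∈ range (2*(a+2)+1), C (R := ℚ) (u (i:ℤ) ((a:ℤ)+2)) * f^i
        = ∑ i ∈ range (2*(a+2)+1),
            C (R := ℚ) (48 * u ((i:ℤ)-1) ((a:ℤ)+1) + u ((i:ℤ)-1) (a:ℤ)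
              + 4096 * u ((i:ℤ)-2) ((a:ℤ)+1)) * f^i := by
      rw [key, ← Finset.sum_add_distrib, ← Finset.sum_add_distrib]
      exact Finset.sum_congr rfl (fun i _ => by rw [map_add, map_add]; ring)
    have res := coeffs_eq f h0 hf1 (2*(a+2)) _ _ key2 iN (by omega)
    rw [show (a:ℤ)+2-1 = (a:ℤ)+1 from by ring, show (a:ℤ)+2-2 = (a:ℤ) from by ring]
    exact res
end
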